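/- arXiv:2402.02261 — 7 statements merged into one kernel-verified Lean document; each statement's English description precedes it below -/
import Mathlib

section
/- Let R be a ring, S a unital subring of R, and K a nil ideal of R (every element of K is nilpotent) such that R = S + K, i.e., every element of R is a sum of an element of S and an element of K. Then R is strongly unit nil-clean if and only if S is strongly unit nil-clean. -/
/-- An element `x` of a ring is *strongly nil-clean* if `x = e + b` where `e` is an
idempotent, `b` is nilpotent, and `e` and `b` commute. -/
def IsStronglyNilClean {R : Type*} [Ring R] (x : R) : Prop :=
  ∃ e b : R, IsIdempotentElem e ∧ IsNilpotent b ∧ e * b = b * e ∧ x = e + b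

/-- A ring `R` is *strongly unit nil-clean* if for every `x : R` there is a unit `u`
such that `u * x` is strongly nil-clean. -/
def StronglyUnitNilClean (R : Type*) [Ring R] : Prop :=
  ∀ x : R, ∃ u : Rˣ, IsStronglyNilClean ((u : R) * x)

/-- A ring `R` is *unit-regular* if every `a : R` satisfies `a = a * u * a` for some unit `u`. -/
def UnitRegular (R : Type*) [Ring R] : Prop :=
  ∀ a : R, ∃ u : Rˣ, a = a * (u : R) * a

/-- A group is *locally finite* if every finitely generated subgroup is finite. -/
def LocallyFiniteGroup (G : Type*) [Group G] : Prop :=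
  ∀ H : Subgroup G, H.FG → (H : Set G).Finite

/-- A subset `T` of a ring is *nilpotent* if there is `n ≥ 1` such that every product of
`n` elements of `T` is zero. -/
def IsNilpotentSubset {R : Type*} [Ring R] (T : Set R) : Prop :=
  ∃ n : ℕ, 0 < n ∧ ∀ l : List R, (∀ a ∈ l, a ∈ T) → l.length = n → l.prod = 0

/-- A subset `S` of a ring is *locally nilpotent* if the non-unital subring generated by
any finite subset of `S` is nilpotent. -/
def IsLocallyNilpotentSet {R : Type*} [Ring R] (S : Set R) : Prop :=
  ∀ F : Finset R, (F : Set R) ⊆ S →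
    IsNilpotentSubset ((NonUnitalSubring.closure (F : Set R) : Set R))

/-- A ring is *NI* if the set of nilpotent elements forms a two-sided ideal. -/
def IsNIRing (R : Type*) [Ring R] : Prop :=
  ∃ I : TwoSidedIdeal R, ∀ x : R, x ∈ I ↔ IsNilpotent x

/-- A ring is *weakly 2-primal* if its set of nilpotent elements is a two-sided ideal
which is moreover locally nilpotent. -/
def Weakly2Primal (R : Type*) [Ring R] : Prop :=
  IsNIRing R ∧ IsLocallyNilpotentSet {x : R | IsNilpotent x}


/-!
An element `x` is strongly nil-clean iff `x - x ^ 2` is nilpotent: idempotents lift modulo the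
nilradical of the commutative subring generated by `x`. Since `x - x ^ 2` changes by an element
of `K` when `x` does, strong nil-cleanness is insensitive to perturbations in the nil ideal `K`.
Writing a unit `u` of `R` as `s + k` with `s ∈ S`, `k ∈ K`, the element `s` is a unit of `S`
(its products with the `S`-part of `u⁻¹` are `1` plus a nilpotent), and `s * x` differs from
`u * x` by an element of `K`; conversely units of `S` are units of `R`.
-/

theorem exists_isIdempotentElem_isNilpotent_sub {A : Type*} [CommRing A] {x : A}
    (hx : IsNilpotent (x - x ^ 2)) : ∃ e, IsIdempotentElem e ∧ IsNilpotent (x - e) := by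
  let f := Ideal.Quotient.mk (nilradical A)
  have hker : ∀ y ∈ RingHom.ker f, IsNilpotent y := fun y hy => by
    rwa [Ideal.mk_ker, mem_nilradical] at hy
  have hfx : IsIdempotentElem (f x) := by
    have h : f (x - x ^ 2) = 0 := Ideal.Quotient.eq_zero_iff_mem.2 (mem_nilradical.2 hx)
    rw [map_sub, map_pow, sub_eq_zero, sq] at h
    exact h.symm
  obtain ⟨e, he, hfe⟩ := exists_isIdempotentElem_eq_of_ker_isNilpotent f hker (f x) ⟨x, rfl⟩ hfx
  exact ⟨e, he, hker _ (by rw [RingHom.mem_ker, map_sub, hfe, sub_self])⟩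

section

variable {R : Type*} [Ring R]

open IsMulCommutative in
theorem isStronglyNilClean_iff_isNilpotent_sub_sq {x : R} :
    IsStronglyNilClean x ↔ IsNilpotent (x - x ^ 2) := by
  constructor
  · rintro ⟨e, b, he, hb, heb, rfl⟩
    have hsq : e + b - (e + b) ^ 2 = b * (1 - 2 * e - b) := by
      rw [sq, add_mul, mul_add, mul_add, he.eq, heb]
      noncomm_ring
    rw [hsq]
    exact Commute.isNilpotent_mul_right (((Commute.one_right b).sub_right
      ((Commute.ofNat_right b 2).mul_right heb.symm)).sub_right (Commute.refl b)) hb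
  · intro hx
    let A := Subring.closure {x}
    have : IsMulCommutative A := Subring.isMulCommutative_closure (by simp)
    let y : A := ⟨x, Subring.subset_closure rfl⟩
    have hy : IsNilpotent (y - y ^ 2) := (IsNilpotent.map_iff A.subtype_injective).1 hx
    obtain ⟨e, he, hye⟩ := exists_isIdempotentElem_isNilpotent_sub hy
    exact ⟨e, x - e, he.map A.subtype, hye.map A.subtype,
      congrArg Subtype.val (mul_comm e (y - e)), by abel⟩

theorem isStronglyNilClean_map_iff {R' F : Type*} [Ring R'] [FunLike F R R'] [RingHomClass F R R']
    {f : F} (hf : Function.Injective f) {x : R} :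
    IsStronglyNilClean (f x) ↔ IsStronglyNilClean x := by
  rw [isStronglyNilClean_iff_isNilpotent_sub_sq, isStronglyNilClean_iff_isNilpotent_sub_sq,
    ← map_pow, ← map_sub, IsNilpotent.map_iff hf]

namespace TwoSidedIdeal

variable {K : TwoSidedIdeal R}

theorem pow_sub_pow_mem {x y : R} (h : x - y ∈ K) (n : ℕ) : x ^ n - y ^ n ∈ K :=
  (K.rel_iff _ _).1 (K.ringCon.toCon.pow n ((K.rel_iff x y).2 h))

theorem isNilpotent_of_sub_mem (hK : ∀ x ∈ K, IsNilpotent x) {x y : R} (h : x - y ∈ K)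
    (hy : IsNilpotent y) : IsNilpotent x := by
  obtain ⟨m, hm⟩ := hy
  obtain ⟨j, hj⟩ := hK _ (by simpa [hm] using pow_sub_pow_mem h m)
  exact ⟨m * j, by rw [pow_mul, hj]⟩

theorem isUnit_of_sub_mem (hK : ∀ x ∈ K, IsNilpotent x) {x u : R} (h : x - u ∈ K)
    (hu : IsUnit u) : IsUnit x := by
  have hx : x = u * (1 + hu.unit⁻¹ * (x - u)) := by
    rw [mul_add, mul_one, ← mul_assoc, hu.mul_val_inv, one_mul, add_sub_cancel]
  rw [hx]
  exact hu.mul (hK _ (K.mul_mem_left _ _ h)).isUnit_one_add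

end TwoSidedIdeal

theorem IsStronglyNilClean.of_sub_mem {K : TwoSidedIdeal R} (hK : ∀ x ∈ K, IsNilpotent x)
    {x y : R} (h : x - y ∈ K) (hy : IsStronglyNilClean y) : IsStronglyNilClean x := by
  rw [isStronglyNilClean_iff_isNilpotent_sub_sq] at hy ⊢
  refine K.isNilpotent_of_sub_mem hK ?_ hy
  rw [sub_sub_sub_comm]
  exact K.sub_mem h (K.pow_sub_pow_mem h 2)

theorem Subring.isUnit_of_isUnit_coe {S : Subring R} {K : TwoSidedIdeal R}
    (hK : ∀ x ∈ K, IsNilpotent x) (hsum : ∀ x : R, ∃ s ∈ S, ∃ k ∈ K, x = s + k) {s : S}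
    (hs : IsUnit (s : R)) : IsUnit s := by
  obtain ⟨t, ht, k, hk, hinv⟩ := hsum ↑hs.unit⁻¹
  have hunit {a : S} (ha : (a : R) - 1 ∈ K) : IsUnit a := by
    have : IsNilpotent (a - 1) :=
      (IsNilpotent.map_iff S.subtype_injective).1 (by simpa using hK _ ha)
    simpa using this.isUnit_add_one
  have hright : IsUnit (s * ⟨t, ht⟩) := hunit <| by
    have : (s : R) * (t + k) = 1 := hinv ▸ hs.mul_val_inv
    simpa [← this, mul_add] using K.neg_mem (K.mul_mem_left (s : R) _ hk)
  have hleft : IsUnit (⟨t, ht⟩ * s) := hunit <| by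
    have : (t + k) * (s : R) = 1 := hinv ▸ hs.val_inv_mul
    simpa [← this, add_mul] using K.neg_mem (K.mul_mem_right _ (s : R) hk)
  obtain ⟨a, ha⟩ := hright.exists_right_inv
  obtain ⟨b, hb⟩ := hleft.exists_left_inv
  exact isUnit_iff_exists_and_exists.2 ⟨⟨_, (mul_assoc _ _ _).symm.trans ha⟩,
    ⟨_, (mul_assoc _ _ _).trans hb⟩⟩

end

theorem strongly_unit_nil_clean_of_subring_add_nil_ideal
    (R : Type*) [Ring R] (S : Subring R) (K : TwoSidedIdeal R)
    (hK : ∀ x ∈ K, IsNilpotent x)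
    (hsum : ∀ x : R, ∃ s ∈ S, ∃ k ∈ K, x = s + k) :
    StronglyUnitNilClean R ↔ StronglyUnitNilClean S := by
  constructor
  · intro hR x
    obtain ⟨u, hux⟩ := hR x
    obtain ⟨s, hs, k, hk, hu⟩ := hsum u
    have hsR : IsUnit s := K.isUnit_of_sub_mem hK (by simpa [hu] using K.neg_mem hk) u.isUnit
    obtain ⟨w, hw⟩ := Subring.isUnit_of_isUnit_coe hK hsum (s := ⟨s, hs⟩) hsR
    refine ⟨w, (isStronglyNilClean_map_iff S.subtype_injective).1 (hux.of_sub_mem hK ?_)⟩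
    simpa [hw, hu, ← sub_mul] using K.neg_mem (K.mul_mem_right _ (x : R) hk)
  · intro hS x
    obtain ⟨s, hs, k, hk, rfl⟩ := hsum x
    obtain ⟨v, hv⟩ := hS ⟨s, hs⟩
    refine ⟨Units.map S.subtype v,
      ((isStronglyNilClean_map_iff S.subtype_injective).2 hv).of_sub_mem hK ?_⟩
    simpa [mul_add] using K.mul_mem_left ((v : S) : R) _ hk
end

section
/- A ring R is unit-regular if and only if the full matrix ring M_n(R) is unit-regular, for every natural number n ≥ 1. -/
/-!
A ring is unit-regular exactly when it is von Neumann regular and has stable range one: if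
`a * x * a = a` and `x + (1 - x * a) * y` is a unit, that unit is again an inner inverse of `a`.
Both properties pass to matrix rings. Regularity is built up one row and one column at a time,
since `a` is regular as soon as `a - a * y * a` is. Stable range one passes from `M_α(R)` and
`M_β(R)` to `M_{α ⊕ β}(R)`: a column operation makes the upper left block a unit, a row operation
clears the block below it, and what is left is a stable range problem for the lower right block.
Both properties also descend from `M_n(R)` to its corner `Eᵢᵢ M_n(R) Eᵢᵢ ≅ R`.
-/

def IsVonNeumannRegular {R : Type*} [Ring R] (a : R) : Prop :=
  ∃ x, a * x * a = a

def IsVonNeumannRegularRing (R : Type*) [Ring R] : Prop :=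
  ∀ a : R, IsVonNeumannRegular a

/-- Stable range one, with `b` standing for an element of `bR` in the usual `aR + bR = R`. -/
def HasStableRangeOne (R : Type*) [Ring R] : Prop :=
  ∀ a x b : R, a * x + b = 1 → ∃ y, IsUnit (a + b * y)

section Ring

variable {R : Type*} [Ring R]

theorem isVonNeumannRegular_zero : IsVonNeumannRegular (0 : R) := ⟨0, by simp⟩

theorem IsVonNeumannRegular.of_sub_mul_mul {a y : R} (h : IsVonNeumannRegular (a - a * y * a)) :
    IsVonNeumannRegular a := by
  obtain ⟨z, hz⟩ := h
  refine ⟨y + (1 - y * a) * z * (1 - a * y), ?_⟩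
  calc a * (y + (1 - y * a) * z * (1 - a * y)) * a
      = a * y * a + (a - a * y * a) * z * (a - a * y * a) := by noncomm_ring
    _ = a := by rw [hz]; abel

theorem UnitRegular.isVonNeumannRegularRing (h : UnitRegular R) : IsVonNeumannRegularRing R :=
  fun a => let ⟨u, hu⟩ := h a; ⟨u, hu.symm⟩

theorem UnitRegular.hasStableRangeOne (h : UnitRegular R) : HasStableRangeOne R := by
  intro a x b hab
  obtain ⟨u, hu⟩ := h a
  have hf : (1 - ↑u * a) * (↑u * a) = 0 := by
    rw [sub_mul, one_mul, mul_assoc, ← mul_assoc a, ← hu, sub_self]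
  have hw : IsNilpotent (↑u * a * x * ↑u⁻¹ * (1 - ↑u * a)) := by
    refine ⟨2, ?_⟩
    calc _ = ↑u * a * x * ↑u⁻¹ * ((1 - ↑u * a) * (↑u * a)) * x * ↑u⁻¹ * (1 - ↑u * a) := by
          noncomm_ring
      _ = 0 := by rw [hf, mul_zero, zero_mul, zero_mul, zero_mul]
  refine ⟨↑u⁻¹ * (1 - ↑u * a), ?_⟩
  have key : a + b * (↑u⁻¹ * (1 - ↑u * a)) = ↑u⁻¹ * (1 - ↑u * a * x * ↑u⁻¹ * (1 - ↑u * a)) := by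
    rw [Units.eq_inv_mul_iff_mul_eq, eq_sub_of_add_eq' hab]
    calc (u : R) * (a + (1 - a * x) * (↑u⁻¹ * (1 - ↑u * a)))
        = ↑u * a + ↑u * (↑u⁻¹ * (1 - ↑u * a)) - ↑u * a * x * ↑u⁻¹ * (1 - ↑u * a) := by
          noncomm_ring
      _ = _ := by rw [Units.mul_inv_cancel_left]; abel
  rw [key]
  exact u⁻¹.isUnit.mul hw.isUnit_one_sub

theorem unitRegular_of_isVonNeumannRegularRing_of_hasStableRangeOne
    (hr : IsVonNeumannRegularRing R) (hs : HasStableRangeOne R) : UnitRegular R := by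
  intro a
  obtain ⟨x, hx⟩ := hr a
  obtain ⟨y, u, hu⟩ := hs x a (1 - x * a) (add_sub_cancel _ _)
  refine ⟨u, ?_⟩
  rw [hu]
  calc a = a * x * a + (a - a * x * a) * y * a := by simp [hx]
    _ = a * (x + (1 - x * a) * y) * a := by noncomm_ring

theorem unitRegular_iff_isVonNeumannRegularRing_and_hasStableRangeOne :
    UnitRegular R ↔ IsVonNeumannRegularRing R ∧ HasStableRangeOne R :=
  ⟨fun h => ⟨h.isVonNeumannRegularRing, h.hasStableRangeOne⟩,
    fun ⟨hr, hs⟩ => unitRegular_of_isVonNeumannRegularRing_of_hasStableRangeOne hr hs⟩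

theorem HasStableRangeOne.of_ringEquiv {T : Type*} [Ring T] (e : R ≃+* T)
    (h : HasStableRangeOne R) : HasStableRangeOne T := by
  intro a x b hab
  obtain ⟨y, hy⟩ := h (e.symm a) (e.symm x) (e.symm b) (by rw [← map_mul, ← map_add, hab, map_one])
  exact ⟨e y, by simpa using hy.map e⟩

theorem hasStableRangeOne_of_subsingleton [Subsingleton R] : HasStableRangeOne R :=
  fun _ _ _ _ => ⟨0, isUnit_of_subsingleton _⟩

theorem exists_isUnit_add_mul_of_isUnit_mul {a x b k n : R} (f : R) (hk : IsUnit k)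
    (hn : IsUnit n) (hab : a * x + b = 1)
    (H : ∀ x' w, k * (a * n + b * f) * x' + w = 1 → ∃ y, IsUnit (k * (a * n + b * f) + w * y)) :
    ∃ y, IsUnit (a + b * y) := by
  obtain ⟨k, rfl⟩ := hk
  obtain ⟨n, rfl⟩ := hn
  set z := (1 - f * ↑n⁻¹ * x) * ↑k⁻¹
  obtain ⟨y, hy⟩ := H (↑n⁻¹ * x * ↑k⁻¹) (↑k * b * z) <| by
    calc _ = ↑k * (a * (↑n * ↑n⁻¹) * x + b) * ↑k⁻¹ := by simp only [z]; noncomm_ring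
      _ = 1 := by rw [Units.mul_inv, mul_one, hab, mul_one, Units.mul_inv]
  refine ⟨(f + z * y) * ↑n⁻¹, ?_⟩
  have : ↑k * (a * ↑n + b * f) + ↑k * b * z * y = ↑k * (a + b * ((f + z * y) * ↑n⁻¹)) * ↑n := by
    calc _ = ↑k * (a * ↑n + b * (f + z * y) * (↑n⁻¹ * ↑n)) := by
          rw [Units.inv_mul, mul_one]; noncomm_ring
      _ = _ := by noncomm_ring
  rwa [this, Units.isUnit_mul_units, Units.isUnit_units_mul] at hy

theorem IsIdempotentElem.corner_mul_corner_eq_self {e v w : R} (he : IsIdempotentElem e)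
    (hw : (1 - e) * w = 1 - e) (hvw : v * w = 1) : e * v * e * (e * w * e) = e := by
  have hew : e * w = w - (1 - e) := by rw [← hw]; noncomm_ring
  calc e * v * e * (e * w * e) = e * v * (e * e) * w * e := by noncomm_ring
    _ = e * v * (e * w) * e := by rw [he.eq]; noncomm_ring
    _ = e * (v * w) * e - e * v * e + e * v * (e * e) := by rw [hew]; noncomm_ring
    _ = e := by simp only [hvw, mul_one, he.eq]; abel

end Ring

namespace Matrix

variable {R : Type*} [Ring R] {ι : Type*} [DecidableEq ι]

def diagIndicator (T : Finset ι) : Matrix ι ι R :=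
  diagonal fun i => if i ∈ T then 1 else 0

@[simp]
theorem diagIndicator_empty : (diagIndicator ∅ : Matrix ι ι R) = 0 := by
  simp [diagIndicator]

theorem diagIndicator_singleton (i : ι) : (diagIndicator {i} : Matrix ι ι R) = single i i 1 := by
  ext j k
  by_cases h : j = k <;> by_cases hi : i = j <;> simp [diagIndicator, single, h, hi, eq_comm]

variable [Fintype ι]

theorem one_sub_diagIndicator (T : Finset ι) :
    1 - (diagIndicator T : Matrix ι ι R) = diagIndicator Tᶜ := by
  ext i j
  rcases eq_or_ne i j with rfl | h
  · by_cases hi : i ∈ T <;> simp [diagIndicator, hi]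
  · simp [diagIndicator, h]

@[simp]
theorem diagIndicator_univ : (diagIndicator Finset.univ : Matrix ι ι R) = 1 := by
  simp [diagIndicator]

theorem diagIndicator_mul_diagIndicator (T U : Finset ι) :
    (diagIndicator T * diagIndicator U : Matrix ι ι R) = diagIndicator (T ∩ U) := by
  simp only [diagIndicator, diagonal_mul_diagonal, Finset.mem_inter, ite_zero_mul_ite_zero, mul_one]

theorem one_sub_diagIndicator_mul_diagIndicator_insert {i : ι} {T : Finset ι} (hi : i ∉ T) :
    (1 - diagIndicator T) * (diagIndicator (insert i T) : Matrix ι ι R) = single i i 1 := by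
  rw [one_sub_diagIndicator, diagIndicator_mul_diagIndicator, ← diagIndicator_singleton]
  congr 1
  ext k
  by_cases hk : k = i <;> simp [hk, hi]

theorem diagIndicator_insert_mul_one_sub_diagIndicator {i : ι} {T : Finset ι} (hi : i ∉ T) :
    diagIndicator (insert i T) * (1 - diagIndicator T : Matrix ι ι R) = single i i 1 := by
  rw [one_sub_diagIndicator, diagIndicator_mul_diagIndicator, Finset.inter_comm,
    ← diagIndicator_mul_diagIndicator, ← one_sub_diagIndicator,
    one_sub_diagIndicator_mul_diagIndicator_insert hi]

theorem _root_.IsVonNeumannRegular.matrix_single (i j : ι) {r : R} (h : IsVonNeumannRegular r) :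
    IsVonNeumannRegular (single i j r) := by
  obtain ⟨s, hs⟩ := h
  exact ⟨single j i s, by rw [single_mul_single_same, single_mul_single_same, hs]⟩

theorem _root_.IsVonNeumannRegularRing.isVonNeumannRegular_of_mul_single_self
    (hR : IsVonNeumannRegularRing R) {j : ι} {a : Matrix ι ι R} (ha : a * single j j 1 = a) :
    IsVonNeumannRegular a := by
  suffices ∀ (T : Finset ι) (a : Matrix ι ι R), diagIndicator T * a = a →
      a * single j j 1 = a → IsVonNeumannRegular a from this Finset.univ a (by simp) ha
  intro T
  induction T using Finset.induction_on with
  | empty => intro a h _; rw [← h, diagIndicator_empty, zero_mul]; exact isVonNeumannRegular_zero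
  | insert i T hiT ih =>
    intro a hT hj
    set p : Matrix ι ι R := diagIndicator T
    obtain ⟨x, hx⟩ := ih (p * a) (by rw [← mul_assoc, diagIndicator_mul_diagIndicator,
      Finset.inter_self]) (by rw [mul_assoc, hj])
    have hia : (1 - p) * a = single i i 1 * a := by
      conv_lhs => rw [← hT]
      rw [← mul_assoc, one_sub_diagIndicator_mul_diagIndicator_insert hiT]
    refine IsVonNeumannRegular.of_sub_mul_mul (y := x * p) ?_
    have hc : a - a * (x * p) * a = single i i 1 * (a - a * x * (p * a)) * single j j 1 := by
      calc a - a * (x * p) * a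
          = (p * a - p * a * x * (p * a)) + ((1 - p) * a - (1 - p) * a * x * (p * a)) := by
            noncomm_ring
        _ = single i i 1 * (a * single j j 1)
            - single i i 1 * a * x * (p * (a * single j j 1)) := by
            rw [hx, sub_self, zero_add, hia, hj]
        _ = _ := by noncomm_ring
    rw [hc, single_mul_mul_single]
    exact (hR _).matrix_single i j

theorem _root_.IsVonNeumannRegularRing.matrix (hR : IsVonNeumannRegularRing R) :
    IsVonNeumannRegularRing (Matrix ι ι R) := by
  suffices ∀ (U : Finset ι) (a : Matrix ι ι R), a * diagIndicator U = a →
      IsVonNeumannRegular a from fun a => this Finset.univ a (by simp)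
  intro U
  induction U using Finset.induction_on with
  | empty => intro a h; rw [← h, diagIndicator_empty, mul_zero]; exact isVonNeumannRegular_zero
  | insert j U hjU ih =>
    intro a hU
    set p : Matrix ι ι R := diagIndicator U
    obtain ⟨x, hx⟩ := ih (a * p) (by
      rw [mul_assoc, diagIndicator_mul_diagIndicator, Finset.inter_self])
    have haj : a * (1 - p) = a * single j j 1 := by
      conv_lhs => rw [← hU]
      rw [mul_assoc, diagIndicator_insert_mul_one_sub_diagIndicator hjU]
    refine IsVonNeumannRegular.of_sub_mul_mul (y := p * x) ?_
    have hc : a - a * (p * x) * a = (a - a * p * x * a) * single j j 1 := by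
      calc a - a * (p * x) * a
          = (a * p - a * p * x * (a * p)) + (a * (1 - p) - a * p * x * (a * (1 - p))) := by
            noncomm_ring
        _ = _ := by rw [hx, sub_self, zero_add, haj]; noncomm_ring
    apply hR.isVonNeumannRegular_of_mul_single_self (j := j)
    rw [hc, mul_assoc, single_mul_single_same, mul_one]

theorem _root_.IsVonNeumannRegularRing.of_matrix (i : ι)
    (h : IsVonNeumannRegularRing (Matrix ι ι R)) : IsVonNeumannRegularRing R := by
  intro a
  obtain ⟨x, hx⟩ := h (single i i a)
  refine ⟨x i i, ?_⟩
  simpa [single_mul_mul_single] using congr_fun (congr_fun hx i) i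

section Blocks

variable {α β : Type*} [Fintype α] [Fintype β] [DecidableEq α] [DecidableEq β]

theorem isUnit_fromBlocks_zero₂₁_of_isUnit {A : Matrix α α R} {B : Matrix α β R} {D : Matrix β β R}
    (hA : IsUnit A) (hD : IsUnit D) : IsUnit (fromBlocks A B 0 D) := by
  obtain ⟨A, rfl⟩ := hA
  obtain ⟨D, rfl⟩ := hD
  refine isUnit_iff_exists.2 ⟨fromBlocks A.inv (-(A.inv * B * D.inv)) 0 D.inv,
    by simp [fromBlocks_multiply, ← fromBlocks_one, ← Matrix.mul_assoc],
    by simp [fromBlocks_multiply, ← fromBlocks_one, Matrix.mul_assoc]⟩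

theorem isUnit_fromBlocks_one_zero_one (C : Matrix β α R) :
    IsUnit (fromBlocks 1 0 C 1 : Matrix (α ⊕ β) (α ⊕ β) R) :=
  isUnit_iff_exists.2 ⟨fromBlocks 1 0 (-C) 1, by simp [fromBlocks_multiply, ← fromBlocks_one],
    by simp [fromBlocks_multiply, ← fromBlocks_one]⟩

theorem _root_.HasStableRangeOne.exists_isUnit_fromBlocks_add_mul
    (hβ : HasStableRangeOne (Matrix β β R)) {u : Matrix α α R} {c : Matrix α β R} {d : Matrix β β R}
    (hu : IsUnit u) {x w : Matrix (α ⊕ β) (α ⊕ β) R} (h : fromBlocks u c 0 d * x + w = 1) :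
    ∃ y, IsUnit (fromBlocks u c 0 d + w * y) := by
  rw [← fromBlocks_toBlocks x, ← fromBlocks_toBlocks w] at h
  obtain ⟨y, hd⟩ := hβ d x.toBlocks₂₂ w.toBlocks₂₂ <| by
    simpa [fromBlocks_multiply, fromBlocks_add, ← fromBlocks_one] using congrArg toBlocks₂₂ h
  refine ⟨fromBlocks 0 0 0 y, ?_⟩
  rw [← fromBlocks_toBlocks w]
  simpa [fromBlocks_multiply, fromBlocks_add] using isUnit_fromBlocks_zero₂₁_of_isUnit hu hd

theorem _root_.HasStableRangeOne.matrix_sum (hα : HasStableRangeOne (Matrix α α R))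
    (hβ : HasStableRangeOne (Matrix β β R)) : HasStableRangeOne (Matrix (α ⊕ β) (α ⊕ β) R) := by
  intro a x b hab
  obtain ⟨a₁, a₂, a₃, a₄, rfl⟩ : ∃ a₁ a₂ a₃ a₄, a = fromBlocks a₁ a₂ a₃ a₄ :=
    ⟨_, _, _, _, (fromBlocks_toBlocks a).symm⟩
  obtain ⟨x₁, x₂, x₃, x₄, rfl⟩ : ∃ x₁ x₂ x₃ x₄, x = fromBlocks x₁ x₂ x₃ x₄ :=
    ⟨_, _, _, _, (fromBlocks_toBlocks x).symm⟩
  obtain ⟨b₁, b₂, b₃, b₄, rfl⟩ : ∃ b₁ b₂ b₃ b₄, b = fromBlocks b₁ b₂ b₃ b₄ :=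
    ⟨_, _, _, _, (fromBlocks_toBlocks b).symm⟩
  obtain ⟨y₁, hu⟩ := hα a₁ x₁ (a₂ * x₃ + b₁) <| by
    simpa [fromBlocks_multiply, fromBlocks_add, ← fromBlocks_one, add_assoc] using
      congrArg toBlocks₁₁ hab
  set u := a₁ + (a₂ * x₃ + b₁) * y₁
  set c := a₃ + (a₄ * x₃ + b₃) * y₁
  set v : Matrix α α R := ↑hu.unit⁻¹
  refine exists_isUnit_add_mul_of_isUnit_mul (fromBlocks y₁ 0 0 0)
    (isUnit_fromBlocks_one_zero_one (-(c * v))) (isUnit_fromBlocks_one_zero_one (x₃ * y₁)) hab ?_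
  have hu' : a₁ + a₂ * (x₃ * y₁) + b₁ * y₁ = u := by
    simp only [u, Matrix.add_mul, Matrix.mul_assoc, add_assoc]
  have hc : a₃ + a₄ * (x₃ * y₁) + b₃ * y₁ = c := by
    simp only [c, Matrix.add_mul, Matrix.mul_assoc, add_assoc]
  have hvu : c * v * u = c := by rw [Matrix.mul_assoc, IsUnit.val_inv_mul, Matrix.mul_one]
  have : fromBlocks 1 0 (-(c * v)) 1 * (fromBlocks a₁ a₂ a₃ a₄ * fromBlocks 1 0 (x₃ * y₁) 1
      + fromBlocks b₁ b₂ b₃ b₄ * fromBlocks y₁ 0 0 0) = fromBlocks u a₂ 0 (a₄ - c * v * a₂) := by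
    simp [fromBlocks_multiply, fromBlocks_add, hu', hc, hvu, sub_eq_neg_add]
  rw [this]
  exact fun _ _ => hβ.exists_isUnit_fromBlocks_add_mul hu

end Blocks

theorem _root_.HasStableRangeOne.matrix (h : HasStableRangeOne R) :
    HasStableRangeOne (Matrix ι ι R) := by
  suffices ∀ n, HasStableRangeOne (Matrix (Fin n) (Fin n) R) from
    (this _).of_ringEquiv (reindexRingEquiv R (Fintype.equivFin ι).symm)
  intro n
  induction n with
  | zero => exact hasStableRangeOne_of_subsingleton
  | succ n ih =>
    exact (ih.matrix_sum (h.of_ringEquiv uniqueRingEquiv.symm)).of_ringEquiv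
      (reindexRingEquiv R finSumFinEquiv)

theorem _root_.HasStableRangeOne.of_matrix (i : ι) (h : HasStableRangeOne (Matrix ι ι R)) :
    HasStableRangeOne R := by
  intro a x b hab
  set E : Matrix ι ι R := single i i 1
  have hE : IsIdempotentElem E := by simp [IsIdempotentElem, E]
  have hEs : ∀ r, (1 - E) * single i i r = 0 := fun r => by simp [E, sub_mul]
  have hsE : ∀ r, single i i r * (1 - E) = 0 := fun r => by simp [E, mul_sub]
  have hEE : (1 - E) * (1 - E) = 1 - E := hE.one_sub.eq
  obtain ⟨Y, hV⟩ := h (1 - E + single i i a) (1 - E + single i i x) (single i i b) (by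
    calc _ = (1 - E) * (1 - E) + (1 - E) * single i i x + single i i a * (1 - E)
          + single i i a * single i i x + single i i b := by noncomm_ring
      _ = 1 := by rw [hEE, hEs, hsE, single_mul_single_same, add_zero, add_zero, add_assoc,
          ← single_add, hab, sub_add_cancel])
  set V := 1 - E + single i i a + single i i b * Y
  obtain ⟨W, hVW, hWV⟩ := isUnit_iff_exists.1 hV
  -- Off row `i`, `V` and hence its inverse `W` agree with `1`, so `V i i` and `W i i` are inverse.
  have hEV : (1 - E) * V = 1 - E := by
    simp only [V, mul_add, hEE, hEs, ← mul_assoc, zero_mul, add_zero]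
  have hEW : (1 - E) * W = 1 - E := by
    calc (1 - E) * W = (1 - E) * V * W := by rw [hEV]
      _ = 1 - E := by rw [mul_assoc, hVW, mul_one]
  have hcorner : ∀ M : Matrix ι ι R, E * M * E = single i i (M i i) := fun M => by
    simp [E, single_mul_mul_single]
  have h₁ := hE.corner_mul_corner_eq_self hEW hVW
  have h₂ := hE.corner_mul_corner_eq_self hEV hWV
  simp only [hcorner, single_mul_single_same, E] at h₁ h₂
  have hVii : V i i = a + b * Y i i := by simp [V, E]
  refine ⟨Y i i, isUnit_iff_exists.2 ⟨W i i, ?_, ?_⟩⟩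
  · simpa [hVii] using congr_fun (congr_fun h₁ i) i
  · simpa [hVii] using congr_fun (congr_fun h₂ i) i

end Matrix

theorem unitRegular_iff_matrix (R : Type*) [Ring R] (n : ℕ) (hn : 1 ≤ n) :
    UnitRegular R ↔ UnitRegular (Matrix (Fin n) (Fin n) R) := by
  simp only [unitRegular_iff_isVonNeumannRegularRing_and_hasStableRangeOne]
  constructor
  · rintro ⟨hr, hs⟩
    exact ⟨hr.matrix, hs.matrix⟩
  · rintro ⟨hr, hs⟩
    exact ⟨hr.of_matrix ⟨0, hn⟩, hs.of_matrix ⟨0, hn⟩⟩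
end

section
/- Let D be a (possibly noncommutative) domain and n ≥ 1. The full matrix ring M_n(D) is strongly unit nil-clean if and only if D is a division ring, i.e., every nonzero element of D is a unit. -/
/-!
Over a division ring every endomorphism `f` of a finite-dimensional space satisfies `f g f = f`
for some automorphism `g` (send a complement of `range f` onto `ker f` and invert `f` on a
complement of `ker f`), so `Mₙ(D) ≃ End(Dⁿ)ᵐᵒᵖ` is unit-regular, and `a = a u a` makes `u a`
idempotent. Conversely, if `e + b` is a strongly nil-clean decomposition of a left-regular
element, then `(e + b)ᵐ (1 - e)ᵐ = bᵐ (1 - e)ᵐ = 0` forces the idempotent `1 - e` to vanish,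
so `e + b = 1 + b` is a unit. For `x ≠ 0` in a domain the scalar matrix `x • 1` is left
regular, hence a unit, hence so is `x`.
-/

open Matrix Module LinearMap

theorem IsStronglyNilClean.isUnit_of_isLeftRegular {R : Type*} [Ring R] {a : R}
    (ha : IsStronglyNilClean a) (hreg : IsLeftRegular a) : IsUnit a := by
  obtain ⟨e, b, he, ⟨m, hm⟩, heb, rfl⟩ := ha
  have hce : Commute e (1 - e) := (Commute.one_right e).sub_right (Commute.refl e)
  have hcb : Commute b (1 - e) := (Commute.one_right b).sub_right heb.symm
  have hac : (e + b) * (1 - e) = b * (1 - e) := by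
    rw [add_mul, mul_sub, mul_one, he.eq, sub_self, zero_add]
  have hpow : (e + b) ^ m * (1 - e) ^ m = (e + b) ^ m * 0 := by
    rw [← (hce.add_left hcb).mul_pow, hac, hcb.mul_pow, hm, zero_mul, mul_zero]
  have he1 : e = 1 :=
    (sub_eq_zero.mp (he.one_sub.eq_zero_of_isNilpotent ⟨m, hreg.pow m hpow⟩)).symm
  exact he1 ▸ (IsNilpotent.isUnit_one_add ⟨m, hm⟩)

theorem StronglyUnitNilClean.isUnit_of_isLeftRegular {R : Type*} [Ring R]
    (h : StronglyUnitNilClean R) {a : R} (ha : IsLeftRegular a) : IsUnit a := by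
  obtain ⟨u, hu⟩ := h a
  exact (Units.isUnit_units_mul u a).mp (hu.isUnit_of_isLeftRegular (u.isRegular.left.mul ha))

theorem Matrix.isLeftRegular_scalar {R : Type*} [Semiring R] (n : Type*) [Fintype n]
    [DecidableEq n] {x : R} (hx : IsLeftRegular x) : IsLeftRegular (scalar n x) := by
  intro M N hMN
  exact hx.matrix (by simpa [smul_eq_diagonal_mul] using hMN)

theorem Matrix.isUnit_of_isUnit_scalar {R : Type*} [Semiring R] {n : Type*} [Fintype n]
    [DecidableEq n] [Nonempty n] {x : R} (hx : IsUnit (scalar n x)) : IsUnit x := by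
  obtain ⟨⟨X, Y, hXY, hYX⟩, hX⟩ := hx
  obtain ⟨i⟩ := ‹Nonempty n›
  simp only at hX
  subst hX
  refine ⟨⟨x, Y i i, ?_, ?_⟩, rfl⟩
  · simpa using congrFun (congrFun hXY i) i
  · simpa using congrFun (congrFun hYX i) i

theorem UnitRegular.stronglyUnitNilClean {R : Type*} [Ring R] (h : UnitRegular R) :
    StronglyUnitNilClean R := by
  intro a
  obtain ⟨u, hu⟩ := h a
  refine ⟨u, u * a, 0, ?_, IsNilpotent.zero, by simp, (add_zero _).symm⟩
  rw [IsIdempotentElem, mul_assoc, ← mul_assoc a, ← hu]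

theorem UnitRegular.of_mulEquiv {R S : Type*} [Ring R] [Ring S] (e : R ≃* S)
    (h : UnitRegular R) : UnitRegular S := by
  intro a
  obtain ⟨u, hu⟩ := h (e.symm a)
  refine ⟨Units.map e.toMonoidHom u, ?_⟩
  simpa using congrArg e hu

theorem UnitRegular.mulOpposite {R : Type*} [Ring R] (h : UnitRegular R) :
    UnitRegular Rᵐᵒᵖ := by
  intro a
  obtain ⟨u, hu⟩ := h a.unop
  refine ⟨Units.opEquiv.symm (MulOpposite.op u), MulOpposite.unop_injective ?_⟩
  simpa [mul_assoc] using hu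

theorem LinearMap.exists_linearEquiv_comp_comp_eq {K V : Type*} [DivisionRing K] [AddCommGroup V]
    [Module K V] [FiniteDimensional K V] (f : V →ₗ[K] V) :
    ∃ g : V ≃ₗ[K] V, f ∘ₗ g.toLinearMap ∘ₗ f = f := by
  obtain ⟨W, hW⟩ := (ker f).exists_isCompl
  obtain ⟨C, hC⟩ := (range f).exists_isCompl
  have hrank : finrank K C = finrank K (ker f) := by
    have := Submodule.finrank_add_eq_of_isCompl hC
    have := f.finrank_range_add_finrank_ker
    omega
  let fW : W ≃ₗ[K] range f :=
    (Submodule.quotientEquivOfIsCompl _ _ hW).symm ≪≫ₗ f.quotKerEquivRange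
  let g : V ≃ₗ[K] V := (Submodule.prodEquivOfIsCompl _ _ hC).symm ≪≫ₗ
    fW.symm.prodCongr (LinearEquiv.ofFinrankEq _ _ hrank) ≪≫ₗ
    Submodule.prodEquivOfIsCompl _ _ hW.symm
  have hg (r : range f) : g r = fW.symm r := by simp [g]
  refine ⟨g, LinearMap.ext fun v => ?_⟩
  let r : range f := ⟨f v, mem_range_self f v⟩
  calc f (g (f v)) = fW (fW.symm r) := congrArg f (hg r)
    _ = f v := by rw [LinearEquiv.apply_symm_apply]

theorem Module.End.unitRegular (K V : Type*) [DivisionRing K] [AddCommGroup V] [Module K V]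
    [FiniteDimensional K V] : UnitRegular (Module.End K V) := by
  intro f
  obtain ⟨g, hg⟩ := f.exists_linearEquiv_comp_comp_eq
  exact ⟨LinearMap.GeneralLinearGroup.generalLinearEquiv K V |>.symm g, hg.symm⟩

theorem Matrix.unitRegular (K ι : Type*) [DivisionRing K] [Fintype ι] [DecidableEq ι] :
    UnitRegular (Matrix ι ι K) :=
  UnitRegular.of_mulEquiv matrixRingEquivEndVecMulOpposite.symm.toMulEquiv
    (UnitRegular.mulOpposite (Module.End.unitRegular K (ι → K)))

theorem matrix_stronglyUnitNilClean_iff_divisionRing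
    (D : Type*) [Ring D] [IsDomain D] (n : ℕ) (hn : 1 ≤ n) :
    StronglyUnitNilClean (Matrix (Fin n) (Fin n) D) ↔ ∀ x : D, x ≠ 0 → IsUnit x := by
  constructor
  · intro h x hx
    have : Nonempty (Fin n) := ⟨⟨0, hn⟩⟩
    exact isUnit_of_isUnit_scalar <| h.isUnit_of_isLeftRegular <|
      isLeftRegular_scalar (Fin n) (IsLeftCancelMulZero.mul_left_cancel_of_ne_zero hx)
  · intro h
    let : DivisionRing D :=
      DivisionRing.ofIsUnitOrEqZero fun a => (em (a = 0)).symm.imp_left (h a)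
    exact UnitRegular.stronglyUnitNilClean (Matrix.unitRegular D (Fin n))
end

section
/- Let R be a reduced ring (R has no nonzero nilpotent elements) and n ≥ 1. The full matrix ring M_n(R) is strongly unit nil-clean if and only if R is unit-regular. -/
/-!
Let `D = diag(a, 1, …, 1)` and suppose `u D = e + b` is strongly nil-clean. Then `x = u D` satisfies
`x - x y x = x (1 - e)` with `x ^ k (1 - e) = 0`. Since `R` is reduced, `D X a = 0` forces `X a = 0`,
so `x ^ k X = 0` forces `X a = 0`; for `X = 1 - e` this kills the corner entry of `D - D (y u) D`,
so `a` is von Neumann regular. In a reduced ring idempotents are central, which makes regular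
elements unit-regular.

Conversely, let `R` be reduced and unit-regular. A nonzero entry `a = a u a` of a matrix `A` splits
`A` along the central idempotent `e = a u`: on the `e`-part the entry can be replaced by the unit
`a + 1 - e`, and a Schur complement reduces to a smaller matrix; on the `(1 - e)`-part the entry
vanishes, so induction on the number of nonzero entries applies. Hence `Mₙ(R)` is unit-regular,
and `a = a u a` makes `u a` idempotent.
-/

def IsUnitRegular {S : Type*} [Monoid S] (a : S) : Prop :=
  ∃ u : Sˣ, a = a * u * a

section

variable {S : Type*}

theorem Units.isUnitRegular [Monoid S] (u : Sˣ) : IsUnitRegular (u : S) :=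
  ⟨u⁻¹, by rw [Units.mul_inv, one_mul]⟩

theorem isUnitRegular_zero [MonoidWithZero S] : IsUnitRegular (0 : S) :=
  ⟨1, (mul_zero _).symm⟩

theorem IsUnitRegular.units_mul_mul [Monoid S] {a : S} (ha : IsUnitRegular a) (p q : Sˣ) :
    IsUnitRegular (p * a * q : S) := by
  obtain ⟨u, hu⟩ := ha
  refine ⟨q⁻¹ * u * p⁻¹, ?_⟩
  conv_lhs => rw [hu]
  simp only [Units.val_mul, mul_assoc, Units.mul_inv_cancel_left, Units.inv_mul_cancel_left]

theorem IsUnitRegular.map {T F : Type*} [Monoid S] [Monoid T] [FunLike F S T]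
    [MonoidHomClass F S T] (f : F) {a : S} (ha : IsUnitRegular a) : IsUnitRegular (f a) := by
  obtain ⟨u, hu⟩ := ha
  exact ⟨Units.map (f : S →* T) u, by rw [Units.coe_map, MonoidHom.coe_coe, ← map_mul,
    ← map_mul, ← hu]⟩

theorem UnitRegular.of_surjective {T F : Type*} [Ring S] [Ring T] [FunLike F S T]
    [MonoidHomClass F S T] (hS : UnitRegular S) (f : F) (hf : Function.Surjective f) :
    UnitRegular T := by
  intro b
  obtain ⟨a, rfl⟩ := hf b
  exact IsUnitRegular.map f (hS a)

theorem UnitRegular.stronglyUnitNilClean_s4 [Ring S] (hS : UnitRegular S) :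
    StronglyUnitNilClean S := by
  intro x
  obtain ⟨u, hu⟩ := hS x
  refine ⟨u, u * x, 0, ?_, IsNilpotent.zero, by rw [mul_zero, zero_mul], (add_zero _).symm⟩
  rw [IsIdempotentElem, mul_assoc, ← mul_assoc x, ← hu]

theorem IsStronglyNilClean.exists_sub_mul_mul_eq_mul [Ring S] {x : S}
    (hx : IsStronglyNilClean x) : ∃ y w : S, ∃ k : ℕ, x - x * y * x = x * w ∧ x ^ k * w = 0 := by
  obtain ⟨e, b, he, ⟨k, hk⟩, hcomm, rfl⟩ := hx
  obtain ⟨v, hv⟩ := IsNilpotent.isUnit_one_add ⟨k, hk⟩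
  have hbw : Commute b (1 - e) := (Commute.one_right b).sub_right hcomm.symm
  have hxw : Commute (e + b) (1 - e) :=
    ((Commute.one_right e).sub_right (Commute.refl e)).add_left hbw
  refine ⟨e * ↑v⁻¹, 1 - e, k + 1, ?_, ?_⟩
  · have hxe : (e + b) * e = e * v := by rw [hv, add_mul, he.eq, mul_one_add, hcomm]
    rw [← mul_assoc, hxe, mul_assoc e, Units.mul_inv, mul_one, mul_add, he.eq, mul_one_sub,
      add_mul, he.eq, hcomm]
  · calc (e + b) ^ (k + 1) * (1 - e) = ((e + b) * (1 - e)) ^ (k + 1) := by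
          rw [hxw.mul_pow, he.one_sub.pow_succ_eq]
      _ = (b * (1 - e)) ^ (k + 1) := by rw [add_mul, he.mul_one_sub_self, zero_add]
      _ = 0 := by rw [hbw.mul_pow, pow_succ, hk, zero_mul, zero_mul]

theorem mul_eq_zero_of_pow_mul_mul_eq_zero [MonoidWithZero S] {t s : S}
    (h : ∀ X, t * X * s = 0 → X * s = 0) (k : ℕ) {X : S} (hX : t ^ k * X * s = 0) :
    X * s = 0 := by
  induction k generalizing X with
  | zero => rwa [pow_zero, one_mul] at hX
  | succ k ih =>
    rw [pow_succ, mul_assoc (t ^ k)] at hX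
    exact h X (ih hX)

section Central

variable [Ring S] {e : S} (he : IsIdempotentElem e) (hc : ∀ s, Commute e s)
include he hc

theorem IsIdempotentElem.mul_add_one_sub_mul_mul_mul_add_one_sub_mul (x y z w : S) :
    (e * x + (1 - e) * y) * (e * z + (1 - e) * w) = e * (x * z) + (1 - e) * (y * w) := by
  have hc' : ∀ s, Commute s (1 - e) := fun s => ((Commute.one_left s).sub_left (hc s)).symm
  rw [add_mul, mul_add, mul_add, (hc x).symm.mul_mul_mul_comm, (hc' x).mul_mul_mul_comm,
    (hc y).symm.mul_mul_mul_comm, (hc' y).mul_mul_mul_comm, he.eq, he.one_sub.eq,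
    he.mul_one_sub_self, he.one_sub_mul_self, zero_mul, zero_mul, add_zero, zero_add]

theorem IsUnitRegular.mul_add_one_sub_mul {a b : S} (ha : IsUnitRegular a)
    (hb : IsUnitRegular b) : IsUnitRegular (e * a + (1 - e) * b) := by
  have hmul := he.mul_add_one_sub_mul_mul_mul_add_one_sub_mul hc
  obtain ⟨u, hu⟩ := ha
  obtain ⟨v, hv⟩ := hb
  let w : Sˣ :=
    { val := e * u + (1 - e) * v
      inv := e * ↑u⁻¹ + (1 - e) * ↑v⁻¹
      val_inv := by rw [hmul, Units.mul_inv, Units.mul_inv, mul_one, mul_one, add_sub_cancel]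
      inv_val := by rw [hmul, Units.inv_mul, Units.inv_mul, mul_one, mul_one, add_sub_cancel] }
  refine ⟨w, ?_⟩
  rw [hmul, hmul, ← hu, ← hv]

end Central

end

section Reduced

variable {R : Type*} [Ring R] [IsReduced R] {a b x e : R}

theorem IsReduced.mul_eq_zero_swap (h : a * b = 0) : b * a = 0 :=
  sq_eq_zero_iff.mp <| by rw [sq, mul_assoc, ← mul_assoc a, h, zero_mul, mul_zero]

theorem IsReduced.mul_eq_zero_of_mul_mul_eq_zero (h : a * b * a = 0) : b * a = 0 :=
  sq_eq_zero_iff.mp <| by rw [sq, mul_assoc, ← mul_assoc a, h, mul_zero]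

theorem IsIdempotentElem.commute_of_isReduced (he : IsIdempotentElem e) (r : R) :
    Commute e r := by
  have hl : e * r * (1 - e) = 0 := IsReduced.mul_eq_zero_of_mul_mul_eq_zero <| by
    rw [← mul_assoc (1 - e) e, he.one_sub_mul_self, zero_mul, zero_mul]
  have hr : (1 - e) * r * e = 0 := IsReduced.mul_eq_zero_of_mul_mul_eq_zero <| by
    rw [← mul_assoc e (1 - e), he.mul_one_sub_self, zero_mul, zero_mul]
  rw [mul_one_sub, sub_eq_zero] at hl
  rw [one_sub_mul, sub_mul, sub_eq_zero] at hr
  exact hl.trans hr.symm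

theorem IsReduced.commute_of_mul_mul_eq_self (h : a * x * a = a) : Commute a x := by
  have he : IsIdempotentElem (a * x) := by rw [IsIdempotentElem, ← mul_assoc, h]
  have hf : IsIdempotentElem (x * a) := by
    rw [IsIdempotentElem, mul_assoc, ← mul_assoc a, h]
  have hfe : x * a = x * a * (a * x) := calc
    x * a = x * (a * x * a) := by rw [h]
    _ = x * (a * (a * x)) := by rw [(he.commute_of_isReduced a).eq]
    _ = x * a * (a * x) := by simp only [mul_assoc]
  have hef : a * x = a * x * (x * a) := calc
    a * x = a * (x * a) * x := by rw [← mul_assoc, h]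
    _ = a * (x * (x * a)) := by rw [mul_assoc, (hf.commute_of_isReduced x).eq]
    _ = a * x * (x * a) := by simp only [mul_assoc]
  exact hef.trans ((he.commute_of_isReduced _).eq.trans hfe.symm)

theorem IsReduced.isUnit_add_one_sub_mul (h : a * x * a = a) : IsUnit (a + 1 - a * x) := by
  have hc : a * x = x * a := (IsReduced.commute_of_mul_mul_eq_self h).eq
  have he : IsIdempotentElem (a * x) := by rw [IsIdempotentElem, ← mul_assoc, h]
  have hae : a * (a * x) = a := by rw [hc, ← mul_assoc, h]
  have hex : Commute (a * x) x := he.commute_of_isReduced x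
  generalize hax : a * x = e at h hc he hae hex ⊢
  set u := x * e
  have hau : a * u = e := by rw [← mul_assoc, hax, he.eq]
  have hua : u * a = e := by rw [mul_assoc, h, ← hc]
  have heu : e * u = u := by rw [← mul_assoc, hex.eq, mul_assoc, he.eq]
  have hue : u * e = u := by rw [mul_assoc, he.eq]
  refine isUnit_iff_exists.mpr ⟨u + 1 - e, ?_, ?_⟩
  · calc (a + 1 - e) * (u + 1 - e)
        = a * u + (a - a * e) + (u - e * u) + (1 - e) - (e - e * e) := by noncomm_ring
      _ = 1 := by rw [hau, hae, heu, he.eq]; abel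
  · calc (u + 1 - e) * (a + 1 - e)
        = u * a + (u - u * e) + (a - e * a) + (1 - e) - (e - e * e) := by noncomm_ring
      _ = 1 := by rw [hua, hue, h, he.eq]; abel

theorem IsReduced.isUnitRegular_of_mul_mul_eq_self (h : a * x * a = a) : IsUnitRegular a := by
  obtain ⟨v, hv⟩ := IsReduced.isUnit_add_one_sub_mul h
  have he : IsIdempotentElem (1 - a * x) := by
    refine IsIdempotentElem.one_sub ?_
    rw [IsIdempotentElem, ← mul_assoc, h]
  have hann : a * (1 - a * x) = 0 := by
    rw [mul_one_sub, IsReduced.commute_of_mul_mul_eq_self h, ← mul_assoc, h, sub_self]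
  refine ⟨v⁻¹, ?_⟩
  calc a = a * ↑v⁻¹ * ↑v := by rw [mul_assoc, Units.inv_mul, mul_one]
    _ = a * ↑v⁻¹ * a + a * ((1 - a * x) * ↑v⁻¹) := by
      rw [(he.commute_of_isReduced _).eq, hv]; noncomm_ring
    _ = a * ↑v⁻¹ * a := by rw [← mul_assoc, hann, zero_mul, add_zero]

end Reduced

namespace Matrix

theorem isUnit_permMatrix {n R : Type*} [Fintype n] [DecidableEq n] [Semiring R]
    (σ : Equiv.Perm n) : IsUnit (σ.permMatrix R) := by
  simpa using (Group.isUnit σ⁻¹).map (permMatrixHom (n := n) (R := R))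

variable {R : Type*} [Ring R]

section Blocks

variable {l m : Type*} [Fintype l] [Fintype m] [DecidableEq l] [DecidableEq m]

theorem isUnitRegular_fromBlocks_zero {A : Matrix l l R} {D : Matrix m m R}
    (hA : IsUnitRegular A) (hD : IsUnitRegular D) : IsUnitRegular (fromBlocks A 0 0 D) := by
  obtain ⟨u, hu⟩ := hA
  obtain ⟨v, hv⟩ := hD
  let w : (Matrix (l ⊕ m) (l ⊕ m) R)ˣ :=
    { val := fromBlocks u 0 0 v
      inv := fromBlocks ↑u⁻¹ 0 0 ↑v⁻¹
      val_inv := by simp [fromBlocks_multiply, fromBlocks_one]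
      inv_val := by simp [fromBlocks_multiply, fromBlocks_one] }
  refine ⟨w, ?_⟩
  simp [w, fromBlocks_multiply, ← hu, ← hv]

theorem isUnitRegular_fromBlocks_units (A : Matrix l l R) (B : Matrix l m R)
    (C : Matrix m l R) (d : (Matrix m m R)ˣ)
    (h : IsUnitRegular (A - B * (↑d⁻¹ : Matrix m m R) * C)) :
    IsUnitRegular (fromBlocks A B C (d : Matrix m m R)) := by
  let P : (Matrix (l ⊕ m) (l ⊕ m) R)ˣ :=
    { val := fromBlocks 1 (B * (↑d⁻¹ : Matrix m m R)) 0 1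
      inv := fromBlocks 1 (-(B * (↑d⁻¹ : Matrix m m R))) 0 1
      val_inv := by simp [fromBlocks_multiply, fromBlocks_one]
      inv_val := by simp [fromBlocks_multiply, fromBlocks_one] }
  let Q : (Matrix (l ⊕ m) (l ⊕ m) R)ˣ :=
    { val := fromBlocks 1 0 ((↑d⁻¹ : Matrix m m R) * C) 1
      inv := fromBlocks 1 0 (-((↑d⁻¹ : Matrix m m R) * C)) 1
      val_inv := by simp [fromBlocks_multiply, fromBlocks_one]
      inv_val := by simp [fromBlocks_multiply, fromBlocks_one] }
  have hLDU : fromBlocks A B C (d : Matrix m m R) =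
      P * fromBlocks (A - B * (↑d⁻¹ : Matrix m m R) * C) 0 0 (d : Matrix m m R) * Q := by
    simp [P, Q, fromBlocks_multiply, Matrix.mul_assoc]
    rw [← Matrix.mul_assoc, Units.mul_inv, Matrix.one_mul]
  rw [hLDU]
  exact (isUnitRegular_fromBlocks_zero h d.isUnitRegular).units_mul_mul P Q

end Blocks

theorem isUnitRegular_of_submatrix {n : Type*} [Fintype n] [DecidableEq n]
    {B : Matrix n n R} (σ τ : Equiv.Perm n) (h : IsUnitRegular (B.submatrix σ τ)) :
    IsUnitRegular B := by
  obtain ⟨P, hP⟩ := isUnit_permMatrix (R := R) σ⁻¹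
  obtain ⟨Q, hQ⟩ := isUnit_permMatrix (R := R) τ
  have hB : B = P * B.submatrix σ τ * Q := by
    rw [hP, hQ, PEquiv.toMatrix_toPEquiv_mul, PEquiv.mul_toMatrix_toPEquiv]
    ext k l
    simp
  rw [hB]
  exact h.units_mul_mul P Q

theorem isUnitRegular_of_isUnit_apply {ι κ : Type*} [Fintype ι] [DecidableEq ι] [Fintype κ]
    [DecidableEq κ] [Unique κ] (h : UnitRegular (Matrix ι ι R))
    (B : Matrix (ι ⊕ κ) (ι ⊕ κ) R) (i j : ι ⊕ κ) (hB : IsUnit (B i j)) : IsUnitRegular B := by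
  let p : ι ⊕ κ := .inr default
  refine isUnitRegular_of_submatrix (Equiv.swap i p) (Equiv.swap j p) ?_
  rw [← fromBlocks_toBlocks (B.submatrix _ _)]
  obtain ⟨d, hd⟩ : IsUnit (toBlocks₂₂ (B.submatrix (Equiv.swap i p) (Equiv.swap j p))) := by
    convert hB.map (scalar κ)
    ext k l
    rw [Subsingleton.elim k default, Subsingleton.elim l default]
    simp [p, toBlocks₂₂]
  rw [← hd]
  exact isUnitRegular_fromBlocks_units _ _ _ d (h _)

open Finset in
theorem unitRegular_of_forall_isUnit_apply {κ : Type*} [Fintype κ] [DecidableEq κ] [IsReduced R]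
    (hR : UnitRegular R)
    (hpivot : ∀ B : Matrix κ κ R, ∀ i j, IsUnit (B i j) → IsUnitRegular B) :
    UnitRegular (Matrix κ κ R) := by
  classical
  intro A
  induction hN : #{p : κ × κ | A p.1 p.2 ≠ 0} using Nat.strong_induction_on generalizing A with
  | _ N ih =>
  by_cases hA : A = 0
  · rw [hA]
    exact isUnitRegular_zero
  obtain ⟨i, j, hij⟩ : ∃ i j, A i j ≠ 0 := by
    by_contra! h
    exact hA (ext h)
  obtain ⟨u, hu⟩ := hR (A i j)
  have he : IsIdempotentElem (A i j * u) := by rw [IsIdempotentElem, ← mul_assoc, ← hu]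
  have hE : IsIdempotentElem (scalar κ (A i j * u)) := he.map (scalar κ)
  have hEc : ∀ M, Commute (scalar κ (A i j * u)) M := scalar_commute _ he.commute_of_isReduced
  have hEmul : ∀ r (M : Matrix κ κ R) k l, (scalar κ r * M) k l = r * M k l := by
    intro r M k l
    rw [scalar_apply, diagonal_mul]
  set E := scalar κ (A i j * u)
  have hE' : 1 - E = scalar κ (1 - A i j * u) := by rw [map_sub, map_one]
  let B := E * A + (1 - E) * single i j 1
  let A' := (1 - E) * A
  have hB : IsUnitRegular B := by
    refine hpivot B i j ?_
    convert IsReduced.isUnit_add_one_sub_mul hu.symm using 1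
    show (E * A + (1 - E) * single i j 1 : Matrix κ κ R) i j = _
    rw [add_apply, hE', hEmul, hEmul, single_apply_same, mul_one, ← hu, add_sub_assoc]
  have hA' : IsUnitRegular A' := by
    have hA'apply : ∀ k l, A' k l = (1 - A i j * u) * A k l := fun k l => by
      rw [show A' = (1 - E) * A from rfl, hE', hEmul]
    refine ih _ ?_ A' rfl
    rw [← hN]
    refine card_lt_card ((ssubset_iff_of_subset fun p => ?_).mpr ⟨(i, j), ?_, ?_⟩)
    · simp only [mem_filter, mem_univ, true_and, hA'apply]
      exact fun hp h0 => hp (by rw [h0, mul_zero])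
    · simpa using hij
    · simp [hA'apply, sub_mul, ← hu]
  have hdecomp : A = E * B + (1 - E) * A' := by
    rw [mul_add, ← mul_assoc, ← mul_assoc, ← mul_assoc, hE.eq, hE.mul_one_sub_self,
      hE.one_sub.eq, zero_mul, add_zero, ← add_mul, add_sub_cancel, one_mul]
  rw [hdecomp]
  exact hB.mul_add_one_sub_mul hE hEc hA'

theorem unitRegular_of_isReduced [IsReduced R] (hR : UnitRegular R)
    (ι : Type*) [Fintype ι] [DecidableEq ι] : UnitRegular (Matrix ι ι R) := by
  suffices h : ∀ n, UnitRegular (Matrix (Fin n) (Fin n) R) from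
    (h _).of_surjective (reindexRingEquiv R (Fintype.equivFin ι).symm) (RingEquiv.surjective _)
  intro n
  induction n with
  | zero => exact fun A => Subsingleton.elim A 0 ▸ isUnitRegular_zero
  | succ n ih =>
    refine (unitRegular_of_forall_isUnit_apply hR fun B i j hB => ?_).of_surjective
      (reindexRingEquiv R finSumFinEquiv) (RingEquiv.surjective _)
    exact isUnitRegular_of_isUnit_apply ih B i j hB

theorem mul_scalar_eq_zero_of_diagonal_mulSingle_mul {n : Type*} [Fintype n] [DecidableEq n]
    [IsReduced R] {z : n} {a : R} {X : Matrix n n R}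
    (h : diagonal (Pi.mulSingle z a) * X * scalar n a = 0) : X * scalar n a = 0 := by
  ext k l
  have hkl := congrFun (congrFun h k) l
  rw [scalar_apply, mul_diagonal, diagonal_mul, zero_apply] at hkl
  rw [scalar_apply, mul_diagonal, zero_apply]
  by_cases hk : k = z
  · subst hk
    rw [Pi.mulSingle_eq_same] at hkl
    exact IsReduced.mul_eq_zero_of_mul_mul_eq_zero hkl
  · rwa [Pi.mulSingle_eq_of_ne hk, one_mul] at hkl

end Matrix

theorem exists_mul_mul_eq_self_of_stronglyUnitNilClean {n R : Type*} [Fintype n] [DecidableEq n]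
    [Ring R] [IsReduced R] (z : n) (h : StronglyUnitNilClean (Matrix n n R)) (a : R) :
    ∃ x, a * x * a = a := by
  set D := Matrix.diagonal (Pi.mulSingle z a)
  obtain ⟨u, hT⟩ := h D
  obtain ⟨y, w, k, hreg, hk⟩ := hT.exists_sub_mul_mul_eq_mul
  have hw : w * Matrix.scalar n a = 0 := by
    refine mul_eq_zero_of_pow_mul_mul_eq_zero (fun X hX => ?_) k (by rw [hk, zero_mul])
    refine Matrix.mul_scalar_eq_zero_of_diagonal_mulSingle_mul (z := z) ?_
    calc D * X * Matrix.scalar n a = ↑u⁻¹ * (↑u * D * X * Matrix.scalar n a) := by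
          simp only [mul_assoc, Units.inv_mul_cancel_left]
      _ = 0 := by rw [hX, mul_zero]
  have hwz : a * w z z = 0 := IsReduced.mul_eq_zero_swap <| by
    simpa [Matrix.scalar_apply, Matrix.mul_diagonal] using congrFun (congrFun hw z) z
  have hD : D - D * (y * (u : Matrix n n R)) * D = D * w := calc
    D - D * (y * (u : Matrix n n R)) * D = ↑u⁻¹ * (↑u * D - ↑u * D * y * (↑u * D)) := by
      simp only [mul_sub, mul_assoc, Units.inv_mul_cancel_left]
    _ = D * w := by rw [hreg, ← mul_assoc, ← mul_assoc, Units.inv_mul, one_mul]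
  refine ⟨(y * (u : Matrix n n R)) z z, ?_⟩
  have hzz := congrFun (congrFun hD z) z
  simp [D, Matrix.mul_diagonal, Matrix.diagonal_mul, hwz, sub_eq_zero] at hzz
  exact hzz.symm

theorem matrix_stronglyUnitNilClean_iff_unitRegular_of_reduced
    (R : Type*) [Ring R] [IsReduced R] (n : ℕ) (hn : 1 ≤ n) :
    StronglyUnitNilClean (Matrix (Fin n) (Fin n) R) ↔ UnitRegular R := by
  refine ⟨fun h a => ?_, fun hR => (Matrix.unitRegular_of_isReduced hR _).stronglyUnitNilClean_s4⟩
  obtain ⟨x, hx⟩ := exists_mul_mul_eq_self_of_stronglyUnitNilClean ⟨0, hn⟩ h a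
  exact IsReduced.isUnitRegular_of_mul_mul_eq_self hx
end

section
/- Let R be a weakly 2-primal ring, i.e., the set Nil(R) of nilpotent elements of R is a two-sided ideal and every non-unital subring generated by a finite subset of Nil(R) is nilpotent. If R is strongly unit nil-clean, then the full matrix ring M_n(R) is strongly unit nil-clean for every n ≥ 1. -/
/-!
Let `I = Nil(R)`. The quotient `S = R/I` is reduced, and it is unit-regular because the unit
`u` with `u * x` strongly nil-clean makes `u * x` idempotent modulo `I`. In a reduced ring
idempotents are central, and this is what lets Gaussian elimination run over `S`: every square
matrix over `S` is equivalent, by invertible row and column operations, to a diagonal matrix of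
idempotents, so `M_n(S)` is unit-regular. As `I` is locally nilpotent, the kernel `M_n(I)` of
`M_n(R) → M_n(S)` is nil. Units lift along a surjection with nil kernel, and `y` is strongly
nil-clean as soon as `y - y ^ 2` is nilpotent; so if `U * X` is idempotent modulo `M_n(I)` for
a lifted unit `U`, then `U * X` is strongly nil-clean.
-/

open Polynomial in
theorem X_sub_X_sq_dvd_X_sub_one_sub_one_sub_pow_pow (n : ℕ) :
    (X - X ^ 2 : ℤ[X]) ∣ X - (1 - (1 - X ^ (n + 1)) ^ (n + 1)) := by
  have hX : X ∣ (X - (1 - (1 - X ^ (n + 1)) ^ (n + 1)) : ℤ[X]) := by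
    simp [X_dvd_iff, coeff_zero_eq_eval_zero]
  have hX1 : X - C 1 ∣ (X - (1 - (1 - X ^ (n + 1)) ^ (n + 1)) : ℤ[X]) := by
    rw [dvd_iff_isRoot]; simp
  have hXX : (X - X ^ 2 : ℤ[X]) = -(X * (X - C 1)) := by rw [C_1]; ring
  rw [hXX, neg_dvd]
  exact IsCoprime.mul_dvd ⟨1, -1, by rw [C_1]; ring⟩ hX hX1

open Polynomial in
theorem isStronglyNilClean_of_isNilpotent_sub_sq {R : Type*} [Ring R] {x : R}
    (h : IsNilpotent (x - x ^ 2)) : IsStronglyNilClean x := by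
  obtain ⟨n, hn⟩ := h
  have hn' : (x - x ^ 2) ^ (n + 1) = 0 := by rw [pow_succ, hn, zero_mul]
  set e := 1 - (1 - x ^ (n + 1)) ^ (n + 1)
  have hex : Commute e x :=
    (Commute.one_left x).sub_left (((Commute.one_left x).sub_left
      ((Commute.refl x).pow_left _)).pow_left _)
  obtain ⟨q, hq⟩ := X_sub_X_sq_dvd_X_sub_one_sub_one_sub_pow_pow n
  have hxe : x - e = (x - x ^ 2) * aeval x q := by
    simpa [e] using congr_arg (aeval x) hq
  have hcomm : Commute (x - x ^ 2) (aeval x q) := by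
    have := (Commute.all (X - X ^ 2 : ℤ[X]) q).map (aeval x)
    rwa [map_sub, map_pow, aeval_X] at this
  exact ⟨e, x - e, isIdempotentElem_one_sub_one_sub_pow_pow x (n + 1) hn',
    ⟨n + 1, by rw [hxe, hcomm.mul_pow, hn', zero_mul]⟩,
    (hex.symm.sub_left (Commute.refl e)).symm.eq, by abel⟩

theorem isUnit_of_isUnit_map {A B : Type*} [Ring A] [Ring B] {f : A →+* B}
    (hf : Function.Surjective f) (hker : ∀ a, f a = 0 → IsNilpotent a) {a : A}
    (ha : IsUnit (f a)) : IsUnit a := by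
  have isUnit_of_map_eq_one : ∀ c, f c = 1 → IsUnit c := fun c hc => by
    simpa using (hker (c - 1) (by simp [hc])).isUnit_one_add
  obtain ⟨b, hb⟩ := hf ↑ha.unit⁻¹
  obtain ⟨u, hu⟩ := isUnit_of_map_eq_one (a * b) (by simp [hb])
  obtain ⟨v, hv⟩ := isUnit_of_map_eq_one (b * a) (by simp [hb])
  refine isUnit_iff_exists_and_exists.2 ⟨⟨b * ↑u⁻¹, ?_⟩, ⟨↑v⁻¹ * b, ?_⟩⟩
  · rw [← mul_assoc, ← hu, u.mul_inv]
  · rw [mul_assoc, ← hv, v.inv_mul]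

theorem stronglyUnitNilClean_of_surjective {A B : Type*} [Ring A] [Ring B] {f : A →+* B}
    (hf : Function.Surjective f) (hker : ∀ a, f a = 0 → IsNilpotent a) (hB : UnitRegular B) :
    StronglyUnitNilClean A := by
  intro x
  obtain ⟨v, hv⟩ := hB (f x)
  obtain ⟨a, ha⟩ := hf v
  have hu : IsUnit a := isUnit_of_isUnit_map hf hker (ha ▸ v.isUnit)
  refine ⟨hu.unit, isStronglyNilClean_of_isNilpotent_sub_sq (hker _ ?_)⟩
  rw [IsUnit.unit_spec, map_sub, map_pow, map_mul, ha, sq, mul_assoc (v : B),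
    ← mul_assoc (f x), ← hv, sub_self]

theorem unitRegular_iff_exists_isIdempotentElem_mul {S : Type*} [Ring S] :
    UnitRegular S ↔ ∀ a : S, ∃ u : Sˣ, IsIdempotentElem ((u : S) * a) := by
  refine forall_congr' fun a => exists_congr fun u => ⟨fun h => ?_, fun h => ?_⟩
  · rw [IsIdempotentElem, mul_assoc, ← mul_assoc a, ← h]
  · have ha : a = ↑u⁻¹ * (u * a) := by simp
    calc a = ↑u⁻¹ * (u * a * (u * a)) := by rw [h.eq, ← ha]
      _ = a * u * a := by rw [← mul_assoc, ← ha, mul_assoc]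

theorem IsIdempotentElem.commute_of_isReduced_s5 {S : Type*} [Ring S] [IsReduced S] {e : S}
    (he : IsIdempotentElem e) (y : S) : Commute e y := by
  have h₁ : e * y * (1 - e) = 0 := eq_zero_of_pow_eq_zero (n := 2) <| by
    rw [sq, mul_assoc (e * y), ← mul_assoc (1 - e), ← mul_assoc (1 - e), he.one_sub_mul_self]
    simp
  have h₂ : (1 - e) * y * e = 0 := eq_zero_of_pow_eq_zero (n := 2) <| by
    rw [sq, mul_assoc ((1 - e) * y), ← mul_assoc e, ← mul_assoc e, he.mul_one_sub_self]
    simp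
  rw [mul_one_sub, sub_eq_zero] at h₁
  rw [one_sub_mul, sub_mul, sub_eq_zero] at h₂
  exact h₁.trans h₂.symm

theorem isReduced_of_surjective {R S : Type*} [Ring R] [Ring S] {f : R →+* S}
    (hf : Function.Surjective f) (hker : ∀ x, f x = 0 ↔ IsNilpotent x) : IsReduced S := by
  refine ⟨fun y ⟨k, hk⟩ => ?_⟩
  obtain ⟨x, rfl⟩ := hf y
  rw [← map_pow, hker] at hk
  exact (hker x).2 (hk.of_pow)

theorem StronglyUnitNilClean.unitRegular_of_surjective {R S : Type*} [Ring R] [Ring S]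
    (hR : StronglyUnitNilClean R) {f : R →+* S} (hf : Function.Surjective f)
    (hker : ∀ x, IsNilpotent x → f x = 0) : UnitRegular S := by
  refine unitRegular_iff_exists_isIdempotentElem_mul.2 fun y => ?_
  obtain ⟨x, rfl⟩ := hf y
  obtain ⟨u, e, b, he, hb, -, hueb⟩ := hR x
  refine ⟨Units.map f u, ?_⟩
  rw [Units.coe_map, MonoidHom.coe_coe, ← map_mul, hueb, map_add, hker b hb, add_zero]
  exact he.map f

open scoped Pointwise in
theorem IsNilpotentSubset.exists_pow_eq_bot {R : Type*} [Ring R] {M : AddSubmonoid R}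
    (hM : IsNilpotentSubset (M : Set R)) : ∃ m, M ^ (m + 1) = ⊥ := by
  obtain ⟨m, hm, hprod⟩ := hM
  obtain ⟨k, rfl⟩ := Nat.exists_eq_add_one_of_ne_zero hm.ne'
  refine ⟨k, ?_⟩
  rw [AddSubmonoid.pow_eq_closure_pow_set, eq_bot_iff, AddSubmonoid.closure_le]
  rintro x hx
  obtain ⟨f, rfl⟩ := Set.mem_pow.1 hx
  exact hprod _ (by simp) (by simp)

open scoped Pointwise in
theorem Matrix.pow_succ_apply_mem {ι R : Type*} [Fintype ι] [DecidableEq ι] [Ring R]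
    {M : AddSubmonoid R} {A : Matrix ι ι R} (hA : ∀ i j, A i j ∈ M) (k : ℕ) (i j : ι) :
    (A ^ (k + 1)) i j ∈ M ^ (k + 1) := by
  induction k generalizing i j with
  | zero => simpa using hA i j
  | succ k ih =>
    rw [pow_succ A, Matrix.mul_apply, pow_succ M]
    exact sum_mem fun t _ => AddSubmonoid.mul_mem_mul (ih i t) (hA t j)

theorem IsLocallyNilpotentSet.isNilpotent_matrix {ι R : Type*} [Fintype ι] [DecidableEq ι]
    [Ring R] {N : Set R} (hN : IsLocallyNilpotentSet N) {A : Matrix ι ι R}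
    (hA : ∀ i j, A i j ∈ N) : IsNilpotent A := by
  classical
  let F : Finset R := Finset.univ.image fun p : ι × ι => A p.1 p.2
  have hAF : ∀ i j, A i j ∈ F := fun i j => Finset.mem_image_of_mem _ (Finset.mem_univ (i, j))
  have hFN : (F : Set R) ⊆ N := by
    rintro _ hx
    obtain ⟨p, -, rfl⟩ := Finset.mem_image.1 hx
    exact hA p.1 p.2
  let M := (NonUnitalSubring.closure (F : Set R)).toAddSubgroup.toAddSubmonoid
  obtain ⟨m, hm⟩ := IsNilpotentSubset.exists_pow_eq_bot (M := M) (hN F hFN)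
  refine ⟨m + 1, Matrix.ext fun i j => ?_⟩
  have := Matrix.pow_succ_apply_mem (M := M)
    (fun i j => NonUnitalSubring.subset_closure (hAF i j)) m i j
  rwa [hm, AddSubmonoid.mem_bot] at this

def UnitEquivalent {M : Type*} [Monoid M] (a b : M) : Prop :=
  ∃ u v : Mˣ, (u : M) * a * v = b

namespace UnitEquivalent

variable {M : Type*} [Monoid M]

theorem refl (a : M) : UnitEquivalent a a := ⟨1, 1, by simp⟩

theorem trans {a b c : M} (h₁ : UnitEquivalent a b) (h₂ : UnitEquivalent b c) :
    UnitEquivalent a c := by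
  obtain ⟨u, v, rfl⟩ := h₁
  obtain ⟨u', v', rfl⟩ := h₂
  exact ⟨u' * u, v * v', by simp [mul_assoc]⟩

theorem mul_left (u : Mˣ) (a : M) : UnitEquivalent a (u * a) := ⟨u, 1, by simp⟩

theorem mul_right (a : M) (v : Mˣ) : UnitEquivalent a (a * v) := ⟨1, v, by simp⟩

theorem map {N F : Type*} [Monoid N] [FunLike F M N] [MonoidHomClass F M N] (f : F) {a b : M}
    (h : UnitEquivalent a b) : UnitEquivalent (f a) (f b) := by
  obtain ⟨u, v, rfl⟩ := h
  exact ⟨Units.map f u, Units.map f v, by simp⟩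

end UnitEquivalent

section Elimination

open Matrix

variable {S : Type*} [Ring S] {ι : Type*} [Fintype ι] [DecidableEq ι]

namespace Matrix

-- Mathlib's `Matrix.transvection` is only set up over commutative rings.
def transvectionUnit {i j : ι} (hij : i ≠ j) (c : S) : (Matrix ι ι S)ˣ where
  val := 1 + single i j c
  inv := 1 + single i j (-c)
  val_inv := by simp [add_mul, mul_add, hij.symm, add_assoc, ← single_add]
  inv_val := by simp [add_mul, mul_add, hij.symm, add_assoc, ← single_add]

theorem transvectionUnit_mulVec {i j : ι} (hij : i ≠ j) (c : S) (v : ι → S) :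
    (transvectionUnit hij c : Matrix ι ι S) *ᵥ v = v + Pi.single i (c * v j) := by
  ext k
  simp [transvectionUnit, add_mulVec, single_mulVec, Pi.single_apply, Function.update_apply]

theorem transvectionUnit_mul_updateRow_diagonal {p j : ι} (hpj : p ≠ j) (c : S)
    (d r : ι → S) :
    (transvectionUnit hpj c : Matrix ι ι S) * (diagonal d).updateRow p r =
      (diagonal d).updateRow p (r + Pi.single j (c * d j)) := by
  ext k l
  rcases eq_or_ne k p with rfl | hk
  · by_cases hl : l = j
    · subst hl; simp [transvectionUnit, add_mul, updateRow_apply, hpj.symm]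
    · simp [transvectionUnit, add_mul, updateRow_apply, hpj.symm, hl, Ne.symm hl]
  · simp [transvectionUnit, add_mul, updateRow_apply, hk]

theorem updateRow_diagonal_mul_transvectionUnit {p i j : ι} (hij : i ≠ j) (c : S)
    {d r : ι → S} (hc : i ≠ p → d i * c = 0) :
    (diagonal d).updateRow p r * (transvectionUnit hij c : Matrix ι ι S) =
      (diagonal d).updateRow p (r + Pi.single j (r i * c)) := by
  ext k l
  by_cases hl : l = j
  · subst hl
    rcases eq_or_ne k p with rfl | hk
    · simp [transvectionUnit, mul_add, updateRow_apply]
    · rcases eq_or_ne k i with rfl | hki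
      · simp [transvectionUnit, mul_add, updateRow_apply, hk, hij, hc hk]
      · simp [transvectionUnit, mul_add, updateRow_apply, hk, hki, diagonal_apply]
  · simp [transvectionUnit, mul_add, updateRow_apply, hl]

end Matrix

def RowEquivalent (v w : ι → S) : Prop :=
  ∃ P : (Matrix ι ι S)ˣ, (P : Matrix ι ι S) *ᵥ v = w

namespace RowEquivalent

theorem refl (v : ι → S) : RowEquivalent v v := ⟨1, by simp⟩

theorem trans {u v w : ι → S} (h₁ : RowEquivalent u v) (h₂ : RowEquivalent v w) :
    RowEquivalent u w := by
  obtain ⟨P, rfl⟩ := h₁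
  obtain ⟨Q, rfl⟩ := h₂
  exact ⟨Q * P, by simp [mulVec_mulVec]⟩

theorem add_single {i j : ι} (hij : i ≠ j) (c : S) (v : ι → S) :
    RowEquivalent v (v + Pi.single i (c * v j)) :=
  ⟨_, transvectionUnit_mulVec hij c v⟩

theorem update_mul (i : ι) (u : Sˣ) (v : ι → S) :
    RowEquivalent v (Function.update v i (u * v i)) := by
  refine ⟨Units.map (diagonalRingHom ι S)
    (MulEquiv.piUnits.symm (Pi.mulSingle (M := fun _ => Sˣ) i u)), ?_⟩
  ext k
  rcases eq_or_ne k i with rfl | hk <;> simp [mulVec_diagonal, *]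

theorem exists_absorb [IsReduced S] (hS : UnitRegular S) {i₀ i₁ : ι} (h : i₁ ≠ i₀)
    {v : ι → S} (hv : IsIdempotentElem (v i₀)) :
    ∃ w, RowEquivalent v w ∧ IsIdempotentElem (w i₀) ∧ w i₁ = 0 ∧
      ∀ k, k ≠ i₀ → k ≠ i₁ → w k = v k := by
  -- Turn `b = v i₁` into `b - b * e₁`, scale it to an idempotent `e₂` orthogonal to `e₁`
  -- (idempotents are central), add it to the pivot, which becomes `e₁ + e₂`, and clear it.
  set e₁ := v i₀
  set b := v i₁
  obtain ⟨u, hu⟩ := unitRegular_iff_exists_isIdempotentElem_mul.1 hS (b - b * e₁)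
  set e₂ := u * (b - b * e₁)
  have h₂₁ : e₂ * e₁ = 0 := by simp [e₂, mul_assoc, sub_mul, hv.eq]
  have h₁₂ : e₁ * e₂ = 0 := by rw [← (hu.commute_of_isReduced_s5 e₁).eq, h₂₁]
  refine ⟨_, ((((add_single h (-b) v).trans (update_mul i₁ u _)).trans
    (add_single h.symm 1 _)).trans (add_single h (-e₂) _)), ?_, ?_, ?_⟩
  · simpa [h, h.symm, ← sub_eq_add_neg] using hv.add hu (by simp [h₁₂, h₂₁])
  · have : e₂ * (e₁ + e₂) = e₂ := by rw [mul_add, h₂₁, zero_add, hu.eq]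
    simp only [neg_mul, Pi.add_apply, Pi.single_eq_same, ← sub_eq_add_neg, Function.update_self,
      one_mul, Function.update_of_ne h.symm, Pi.single_eq_of_ne h, Pi.single_eq_of_ne h.symm,
      add_zero]
    rw [sub_eq_zero]
    exact this.symm
  · intro k hk₀ hk₁
    simp [hk₀, hk₁]

theorem exists_single [IsReduced S] (hS : UnitRegular S) (i₀ : ι) (v : ι → S) :
    ∃ e, IsIdempotentElem e ∧ RowEquivalent v (Pi.single i₀ e) := by
  suffices key : ∀ T : Finset ι, ∀ v : ι → S, IsIdempotentElem (v i₀) →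
      (∀ k, k ≠ i₀ → k ∉ T → v k = 0) →
        ∃ e, IsIdempotentElem e ∧ RowEquivalent v (Pi.single i₀ e) by
    obtain ⟨u, hu⟩ := unitRegular_iff_exists_isIdempotentElem_mul.1 hS (v i₀)
    obtain ⟨e, he, hv⟩ :=
      key Finset.univ (Function.update v i₀ (u * v i₀)) (by simpa) (by simp)
    exact ⟨e, he, (update_mul i₀ u v).trans hv⟩
  intro T
  induction T using Finset.induction_on with
  | empty =>
    intro v hv hsupp
    refine ⟨v i₀, hv, ?_⟩
    convert refl v using 1
    ext k
    rcases eq_or_ne k i₀ with rfl | hk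
    · simp
    · simp [hk, hsupp k hk]
  | insert i₁ T hi₁ ih =>
    intro v hv hsupp
    by_cases h : i₁ = i₀
    · subst h
      exact ih v hv fun k hk hkT => hsupp k hk (by simp [hk, hkT])
    · obtain ⟨w, hvw, hw₀, hw₁, hw⟩ := exists_absorb hS h hv
      obtain ⟨e, he, hwe⟩ := ih w hw₀ fun k hk hkT => by
        rcases eq_or_ne k i₁ with rfl | hk₁
        · exact hw₁
        · rw [hw k hk hk₁, hsupp k hk (by simp [hk₁, hkT])]
      exact ⟨e, he, hvw.trans hwe⟩

end RowEquivalent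

theorem exists_unitEquivalent_updateRow_diagonal_orthogonalize {p j : ι} (hpj : p ≠ j)
    (d r : ι → S) :
    ∃ r', UnitEquivalent ((diagonal d).updateRow p r) ((diagonal d).updateRow p r') ∧
      r' p = r p ∧ r' j = (1 - r p) * r j * (1 - d j) ∧ ∀ k, k ≠ j → r' k = r k := by
  have h₁ := UnitEquivalent.mul_left (transvectionUnit hpj (-(r j))) ((diagonal d).updateRow p r)
  rw [transvectionUnit_mul_updateRow_diagonal] at h₁
  have h₂ := UnitEquivalent.mul_right ((diagonal d).updateRow p (r + Pi.single j (-r j * d j)))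
    (transvectionUnit hpj (-(r j - r j * d j)))
  rw [updateRow_diagonal_mul_transvectionUnit hpj _ (absurd rfl)] at h₂
  refine ⟨_, h₁.trans h₂, by simp [hpj], ?_, fun k hk => by simp [hk, hpj]⟩
  simp only [neg_mul, Pi.add_apply, Pi.single_eq_of_ne hpj, add_zero, neg_sub, Pi.single_eq_same]
  noncomm_ring

theorem exists_unitEquivalent_updateRow_diagonal_absorb [IsReduced S] (hS : UnitRegular S)
    {p j : ι} (hpj : p ≠ j) {d r : ι → S} (hf : IsIdempotentElem (r p))
    (hfσ : r p * r j = 0) (hσd : r j * d j = 0) :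
    ∃ r', UnitEquivalent ((diagonal d).updateRow p r) ((diagonal d).updateRow p r') ∧
      IsIdempotentElem (r' p) ∧ r' j = 0 ∧ ∀ k, k ≠ p → k ≠ j → r' k = r k := by
  -- `e = w * r j` is a central idempotent orthogonal to `r p` and `d j`: one column operation
  -- moves it into the pivot, which becomes `r p + e`, a second one clears `r j = w⁻¹ * e`.
  obtain ⟨w, he⟩ := unitRegular_iff_exists_isIdempotentElem_mul.1 hS (r j)
  set e := w * r j
  have hσ : r j = ↑w⁻¹ * e := by simp [e]
  have hef : e * r p = 0 := by
    rw [mul_assoc, ← (hf.commute_of_isReduced_s5 (r j)).eq, hfσ, mul_zero]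
  have hfe : r p * e = 0 := by rw [(hf.commute_of_isReduced_s5 e).eq, hef]
  have hde : d j * (e * w) = 0 := by
    rw [← mul_assoc, ← (he.commute_of_isReduced_s5 (d j)).eq, mul_assoc (w : S), hσd, mul_zero,
      zero_mul]
  have hσe : r j * (e * w) = e := by
    rw [hσ, ← mul_assoc, mul_assoc _ e e, he.eq, mul_assoc, (he.commute_of_isReduced_s5 _).eq]
    simp
  have h₃ := UnitEquivalent.mul_right ((diagonal d).updateRow p r)
    (transvectionUnit hpj.symm (e * w))
  rw [updateRow_diagonal_mul_transvectionUnit hpj.symm _ fun _ => hde, hσe] at h₃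
  have h₄ := UnitEquivalent.mul_right ((diagonal d).updateRow p (r + Pi.single p e))
    (transvectionUnit hpj (-(↑w⁻¹ * e)))
  rw [updateRow_diagonal_mul_transvectionUnit hpj _ (absurd rfl)] at h₄
  refine ⟨_, h₃.trans h₄, ?_, ?_, fun k hkp hkj => by simp [hkp, hkj]⟩
  · simpa [hpj] using hf.add he (by rw [hfe, hef, add_zero])
  · have hfw : r p * (↑w⁻¹ * e) = 0 := by
      rw [← mul_assoc, (hf.commute_of_isReduced_s5 _).eq, mul_assoc, hfe, mul_zero]
    have hew : e * (↑w⁻¹ * e) = ↑w⁻¹ * e := by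
      rw [← mul_assoc, (he.commute_of_isReduced_s5 (↑w⁻¹ : S)).eq, mul_assoc, he.eq]
    simp only [Pi.add_apply, Pi.single_eq_same, Pi.single_eq_of_ne hpj.symm, add_zero, add_mul,
      hfw, hew, zero_add, mul_neg]
    rw [← hσ, add_neg_cancel]

theorem exists_unitEquivalent_diagonal_of_updateRow_diagonal [IsReduced S] (hS : UnitRegular S)
    {p : ι} {d : ι → S} (hd : ∀ i, i ≠ p → IsIdempotentElem (d i)) {r : ι → S}
    (hr : IsIdempotentElem (r p)) :
    ∃ d', (∀ i, IsIdempotentElem (d' i)) ∧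
      UnitEquivalent ((diagonal d).updateRow p r) (diagonal d') := by
  suffices key : ∀ T : Finset ι, ∀ r : ι → S, IsIdempotentElem (r p) →
      (∀ k, k ≠ p → k ∉ T → r k = 0) → ∃ d', (∀ i, IsIdempotentElem (d' i)) ∧
        UnitEquivalent ((diagonal d).updateRow p r) (diagonal d') from
    key Finset.univ r hr (by simp)
  intro T
  induction T using Finset.induction_on with
  | empty =>
    intro r hr hsupp
    refine ⟨Function.update d p (r p), fun i => ?_, ?_⟩
    · rcases eq_or_ne i p with rfl | hi
      · simpa using hr
      · simpa [hi] using hd i hi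
    · convert UnitEquivalent.refl _ using 1
      ext k l
      rcases eq_or_ne k p with rfl | hk
      · rcases eq_or_ne l k with rfl | hl
        · simp
        · simp [hsupp l hl, diagonal_apply_ne _ hl.symm]
      · simp [updateRow_apply, diagonal_apply, hk]
  | insert j T hj ih =>
    intro r hr hsupp
    by_cases hpj : p = j
    · subst hpj
      exact ih r hr fun k hk hkT => hsupp k hk (by simp [hk, hkT])
    obtain ⟨r₁, h₁, hr₁p, hr₁j, hr₁⟩ :=
      exists_unitEquivalent_updateRow_diagonal_orthogonalize hpj d r
    obtain ⟨r₂, h₂, hr₂p, hr₂j, hr₂⟩ :=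
      exists_unitEquivalent_updateRow_diagonal_absorb hS hpj (hr₁p ▸ hr)
        (by rw [hr₁p, hr₁j, ← mul_assoc, ← mul_assoc, hr.mul_one_sub_self, zero_mul,
          zero_mul])
        (by rw [hr₁j, mul_assoc, (hd j (Ne.symm hpj)).one_sub_mul_self, mul_zero])
    obtain ⟨d', hd', h₃⟩ := ih r₂ hr₂p fun k hkp hkT => by
      rcases eq_or_ne k j with rfl | hkj
      · exact hr₂j
      · rw [hr₂ k hkp hkj, hr₁ k hkj, hsupp k hkp (by simp [hkj, hkT])]
    exact ⟨d', hd', h₁.trans (h₂.trans h₃)⟩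

theorem UnitEquivalent.exists_fromBlocks_zero₂₁ {m n : Type*} [Fintype m] [DecidableEq m]
    [Fintype n] [DecidableEq n] (a : Matrix m m S) (c : Matrix m n S) {B B' : Matrix n n S}
    (h : UnitEquivalent B B') :
    ∃ c', UnitEquivalent (fromBlocks a c 0 B) (fromBlocks a c' 0 B') := by
  obtain ⟨P, Q, rfl⟩ := h
  let φ : Matrix n n S →* Matrix (m ⊕ n) (m ⊕ n) S :=
    { toFun := fromBlocks 1 0 0
      map_one' := fromBlocks_one
      map_mul' := fun X Y => by simp [fromBlocks_multiply] }
  exact ⟨c * (Q : Matrix n n S), Units.map φ P, Units.map φ Q,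
    by simp [φ, fromBlocks_multiply, Matrix.mul_assoc]⟩

variable (S ι) in
def IdempotentDiagonalizable : Prop :=
  ∀ A : Matrix ι ι S, ∃ d : ι → S, (∀ i, IsIdempotentElem (d i)) ∧
    UnitEquivalent A (diagonal d)

namespace IdempotentDiagonalizable

theorem of_equiv {κ : Type*} [Fintype κ] [DecidableEq κ] (e : κ ≃ ι)
    (h : IdempotentDiagonalizable S κ) : IdempotentDiagonalizable S ι := by
  intro A
  obtain ⟨d, hd, hA⟩ := h (reindex e.symm e.symm A)
  refine ⟨d ∘ e.symm, fun i => hd _, ?_⟩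
  simpa [submatrix_diagonal_equiv] using hA.map (reindexRingEquiv S e)

theorem fin_one_sum [IsReduced S] (hS : UnitRegular S) {κ : Type*} [Fintype κ] [DecidableEq κ]
    (h : IdempotentDiagonalizable S κ) : IdempotentDiagonalizable S (Fin 1 ⊕ κ) := by
  -- Clear the first column, diagonalize the lower right block, then absorb the first row.
  intro A
  obtain ⟨f, hf, P, hP⟩ := RowEquivalent.exists_single hS (Sum.inl 0) fun k => A k (Sum.inl 0)
  set M := (P : Matrix (Fin 1 ⊕ κ) (Fin 1 ⊕ κ) S) * A
  have hcol : ∀ k, M k (Sum.inl 0) = (Pi.single (Sum.inl 0) f : Fin 1 ⊕ κ → S) k :=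
    fun k => by rw [← hP]; rfl
  have hM : M = fromBlocks (of fun _ _ => f) M.toBlocks₁₂ 0 M.toBlocks₂₂ := by
    conv_lhs => rw [← fromBlocks_toBlocks M]
    congr
    · ext i j
      simpa [toBlocks₁₁, Subsingleton.elim i 0, Subsingleton.elim j 0] using hcol (Sum.inl 0)
    · ext i j
      simpa [toBlocks₂₁, Subsingleton.elim j 0] using hcol (Sum.inr i)
  obtain ⟨d, hd, hB⟩ := h M.toBlocks₂₂
  obtain ⟨c, hc⟩ := hB.exists_fromBlocks_zero₂₁ (of fun _ _ => f) M.toBlocks₁₂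
  have hrow : fromBlocks (of fun _ _ => f) c 0 (diagonal d) =
      (diagonal (Sum.elim (fun _ => f) d)).updateRow (Sum.inl 0)
        (Sum.elim (fun _ => f) (c 0)) := by
    ext (i | i) (j | j) <;> simp [updateRow_apply, diagonal_apply, Fin.fin_one_eq_zero]
  rw [hrow] at hc
  obtain ⟨d', hd', hD⟩ := exists_unitEquivalent_diagonal_of_updateRow_diagonal hS
    (p := (Sum.inl 0 : Fin 1 ⊕ κ)) (d := Sum.elim (fun _ => f) d)
    (r := Sum.elim (fun _ => f) (c 0))
    (fun i _ => by rcases i with i | i <;> simp [hf, hd]) hf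
  have hAM : UnitEquivalent A M := UnitEquivalent.mul_left P A
  rw [hM] at hAM
  exact ⟨d', hd', hAM.trans (hc.trans hD)⟩

theorem unitRegular (h : IdempotentDiagonalizable S ι) :
    UnitRegular (Matrix ι ι S) := by
  intro A
  obtain ⟨d, hd, P, Q, hPQ⟩ := h A
  have hA : A = ((P⁻¹ : (Matrix ι ι S)ˣ) : Matrix ι ι S) * diagonal d *
      ((Q⁻¹ : (Matrix ι ι S)ˣ) : Matrix ι ι S) := by
    rw [← hPQ]; simp [mul_assoc]
  have hD : diagonal d * diagonal d = diagonal d := by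
    rw [diagonal_mul_diagonal]
    exact congr_arg diagonal (funext fun i => (hd i).eq)
  refine ⟨Q * P, ?_⟩
  rw [hA]
  simp [mul_assoc, ← mul_assoc (diagonal d) (diagonal d), hD]

end IdempotentDiagonalizable

theorem idempotentDiagonalizable_fin [IsReduced S] (hS : UnitRegular S) :
    ∀ n, IdempotentDiagonalizable S (Fin n)
  | 0 => fun A => ⟨0, fun _ => .zero, by rw [Subsingleton.elim A (diagonal 0)]; exact .refl _⟩
  | n + 1 => ((idempotentDiagonalizable_fin hS n).fin_one_sum hS).of_equiv
      (finSumFinEquiv.trans (finCongr (Nat.add_comm 1 n)))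

theorem UnitRegular.matrix [IsReduced S] (hS : UnitRegular S) : UnitRegular (Matrix ι ι S) :=
  ((idempotentDiagonalizable_fin hS _).of_equiv (Fintype.equivFin ι).symm).unitRegular

end Elimination

theorem matrix_stronglyUnitNilClean_of_weakly2Primal_general
    (R : Type*) [Ring R] (h2p : Weakly2Primal R) (hR : StronglyUnitNilClean R)
    (n : ℕ) :
    StronglyUnitNilClean (Matrix (Fin n) (Fin n) R) := by
  obtain ⟨⟨I, hI⟩, hlocal⟩ := h2p
  let π := I.ringCon.mk'
  have hπ : ∀ x, π x = 0 ↔ IsNilpotent x := fun x => by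
    rw [← TwoSidedIdeal.mem_ker, TwoSidedIdeal.ker_ringCon_mk', hI]
  have hπsurj : Function.Surjective π := I.ringCon.mk'_surjective
  have := isReduced_of_surjective hπsurj hπ
  refine stronglyUnitNilClean_of_surjective (f := π.mapMatrix)
    (fun B => ⟨B.map (Function.surjInv hπsurj), by ext; simp [Function.surjInv_eq]⟩)
    (fun A hA => hlocal.isNilpotent_matrix fun i j => (hπ _).1 (congr_fun₂ hA i j))
    (hR.unitRegular_of_surjective hπsurj fun x => (hπ x).2).matrix

theorem matrix_stronglyUnitNilClean_of_weakly2Primal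
    (R : Type*) [Ring R] (h2p : Weakly2Primal R) (hR : StronglyUnitNilClean R)
    (n : ℕ) (hn : 1 ≤ n) :
    StronglyUnitNilClean (Matrix (Fin n) (Fin n) R) :=
  matrix_stronglyUnitNilClean_of_weakly2Primal_general R h2p hR n
end

section
/- Let R be an NI-ring, i.e., the set Nil(R) of nilpotent elements of R forms a two-sided ideal. If the full matrix ring M_n(R) is strongly unit nil-clean for some n ≥ 1, then R is strongly unit nil-clean. -/
/-! Write `S = R / Nil(R)`, a reduced ring; `M_n(S)` is an image of `M_n(R)`, hence strongly unit
nil-clean. For `x : S` decompose `u * (x • 1) = E + B` in `M_n(S)`. A power of `u * (x • 1)` is a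
unit times `E`, and in a reduced ring the matrices whose entries are all killed by `x` on the left
are stable under left multiplication; so `x` kills every entry of `1 - E` and `E_ii` kills the right
annihilator of `x`. Thus `g = 1 - E_ii` is an idempotent generating that annihilator, and `x + g`
has zero right annihilator; for it the same argument forces `E = 1`, making `x + g` a unit `v`
with `v⁻¹ x = 1 - g` idempotent. Units lift modulo a nil ideal, and an element `a` with `a - a²`
nilpotent is strongly nil-clean via the idempotent `1 - (1 - aⁿ)ⁿ`. -/

theorem sub_sq_dvd_sub_one_sub_one_sub_pow_pow {A : Type*} [CommRing A] (a : A) {n : ℕ}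
    (hn : n ≠ 0) : a - a ^ 2 ∣ a - (1 - (1 - a ^ n) ^ n) := by
  obtain ⟨m, rfl⟩ := Nat.exists_eq_succ_of_ne_zero hn
  rw [← Ideal.mem_span_singleton, ← Ideal.Quotient.eq_zero_iff_mem]
  have ha : IsIdempotentElem (Ideal.Quotient.mk (Ideal.span {a - a ^ 2}) a) := by
    rw [IsIdempotentElem, ← map_mul, eq_comm, ← sub_eq_zero, ← map_sub,
      Ideal.Quotient.eq_zero_iff_mem, Ideal.mem_span_singleton, ← sq]
  simp only [map_sub, map_one, map_pow, ha.pow_succ_eq, ha.one_sub.pow_succ_eq, sub_sub_cancel,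
    sub_self]

theorem isUnit_of_isUnit_mul_of_isUnit_mul {M : Type*} [Monoid M] {a b : M}
    (hab : IsUnit (a * b)) (hba : IsUnit (b * a)) : IsUnit a :=
  isUnit_iff_exists_and_exists.2
    ⟨⟨b * ↑hab.unit⁻¹, by rw [← mul_assoc, IsUnit.mul_val_inv]⟩,
      ⟨↑hba.unit⁻¹ * b, by rw [mul_assoc, IsUnit.val_inv_mul]⟩⟩

theorem exists_units_map_eq_of_ker_isNilpotent {R S : Type*} [Ring R] [Ring S] {f : R →+* S}
    (hf : Function.Surjective f) (hker : ∀ r, f r = 0 → IsNilpotent r) (v : Sˣ) :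
    ∃ u : Rˣ, f u = v := by
  obtain ⟨p, hp⟩ := hf v
  obtain ⟨q, hq⟩ := hf ↑v⁻¹
  have isUnit_of_map_eq_one {r : R} (hr : f r = 1) : IsUnit r := by
    simpa using (hker (r - 1) (by simp [hr])).isUnit_add_one
  have hpq : IsUnit (p * q) := isUnit_of_map_eq_one (by simp [hp, hq])
  have hqp : IsUnit (q * p) := isUnit_of_map_eq_one (by simp [hp, hq])
  exact ⟨(isUnit_of_isUnit_mul_of_isUnit_mul hpq hqp).unit, hp⟩

theorem StronglyUnitNilClean.of_surjective_of_ker_isNilpotent {R S : Type*} [Ring R] [Ring S]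
    {f : R →+* S} (hf : Function.Surjective f) (hker : ∀ r, f r = 0 → IsNilpotent r)
    (hS : ∀ y : S, ∃ v : Sˣ, IsIdempotentElem (↑v * y)) : StronglyUnitNilClean R := by
  intro x
  obtain ⟨v, hv⟩ := hS (f x)
  obtain ⟨u, hu⟩ := exists_units_map_eq_of_ker_isNilpotent hf hker v
  refine ⟨u, isStronglyNilClean_of_isNilpotent_sub_sq (hker _ ?_)⟩
  rw [map_sub, map_pow, map_mul, hu, sq, hv.eq, sub_self]

theorem StronglyUnitNilClean.of_surjective {R S : Type*} [Ring R] [Ring S] (f : R →+* S)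
    (hf : Function.Surjective f) (h : StronglyUnitNilClean R) : StronglyUnitNilClean S := by
  intro y
  obtain ⟨x, rfl⟩ := hf y
  obtain ⟨u, e, b, he, hb, heb, hx⟩ := h x
  exact ⟨Units.map f u, f e, f b, he.map f, hb.map f, by simp only [← map_mul, heb],
    by rw [Units.coe_map, MonoidHom.coe_coe, ← map_mul, hx, map_add]⟩

theorem isReduced_of_surjective_of_ker_eq {R S : Type*} [Ring R] [Ring S] {f : R →+* S}
    (hf : Function.Surjective f) (hker : ∀ r, f r = 0 ↔ IsNilpotent r) : IsReduced S := by
  refine ⟨fun y ⟨m, hm⟩ => ?_⟩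
  obtain ⟨x, rfl⟩ := hf y
  rw [← map_pow, hker] at hm
  exact (hker x).2 hm.of_pow

theorem RingHom.mapMatrix_surjective {ι R S : Type*} [Fintype ι] [DecidableEq ι]
    [NonAssocSemiring R] [NonAssocSemiring S] {f : R →+* S} (hf : Function.Surjective f) :
    Function.Surjective (f.mapMatrix : Matrix ι ι R →+* Matrix ι ι S) :=
  fun A => ⟨A.map (Function.surjInv hf), by ext; simp [Function.surjInv_eq hf]⟩

namespace IsReduced

variable {S : Type*} [Ring S] [IsReduced S] {a b : S}

theorem mul_eq_zero_symm (h : a * b = 0) : b * a = 0 :=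
  eq_zero_of_pow_eq_zero (n := 2) (by rw [sq, mul_assoc, ← mul_assoc a, h, zero_mul, mul_zero])

theorem mul_mul_eq_zero (h : a * b = 0) (t : S) : a * (t * b) = 0 :=
  mul_eq_zero_symm (by rw [mul_assoc, mul_eq_zero_symm h, mul_zero])

theorem mul_eq_zero_of_mul_mul_eq_zero_s6 (h : a * (a * b) = 0) : a * b = 0 :=
  eq_zero_of_pow_eq_zero (n := 2) (by rw [sq, ← mul_assoc, mul_eq_zero_symm h, zero_mul])

end IsReduced

theorem IsIdempotentElem.exists_pow_add_eq_units_mul {R : Type*} [Ring R] {e b : R}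
    (he : IsIdempotentElem e) (hb : IsNilpotent b) (heb : Commute e b) :
    ∃ k ≠ 0, ∃ c : Rˣ, (e + b) ^ k = c * e := by
  obtain ⟨m, hm⟩ := hb
  have hbk : b ^ (m + 1) = 0 := by rw [pow_succ, hm, zero_mul]
  have hce : Commute (e + b) e := (Commute.refl e).add_left heb.symm
  have h_e : (e + b) ^ (m + 1) * e = (1 + b) ^ (m + 1) * e :=
    calc (e + b) ^ (m + 1) * e = ((e + b) * e) ^ (m + 1) := by rw [hce.mul_pow, he.pow_succ_eq]
      _ = ((1 + b) * e) ^ (m + 1) := by rw [add_mul, add_mul, one_mul, he.eq]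
      _ = (1 + b) ^ (m + 1) * e := by
        rw [((Commute.one_left e).add_left heb.symm).mul_pow, he.pow_succ_eq]
  have h_one_sub_e : (e + b) ^ (m + 1) * (1 - e) = 0 :=
    calc (e + b) ^ (m + 1) * (1 - e) = ((e + b) * (1 - e)) ^ (m + 1) := by
          rw [((Commute.one_right _).sub_right hce).mul_pow, he.one_sub.pow_succ_eq]
      _ = (b * (1 - e)) ^ (m + 1) := by rw [add_mul, he.mul_one_sub_self, zero_add]
      _ = 0 := by rw [((Commute.one_right b).sub_right heb.symm).mul_pow, hbk, zero_mul]
  refine ⟨m + 1, m.succ_ne_zero, ((IsNilpotent.isUnit_one_add ⟨m, hm⟩).pow (m + 1)).unit, ?_⟩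
  rw [IsUnit.unit_spec, ← h_e, ← sub_eq_zero, ← mul_one_sub, h_one_sub_e]

namespace Matrix

variable {ι S : Type*} [Fintype ι] [Ring S] {x : S}

theorem smul_mul_eq_zero_of_smul_eq_zero [IsReduced S] {N : Matrix ι ι S} (h : x • N = 0)
    (A : Matrix ι ι S) : x • (A * N) = 0 := by
  ext i j
  simp only [smul_apply, mul_apply, smul_eq_mul, Finset.mul_sum, zero_apply]
  exact Finset.sum_eq_zero fun l _ => IsReduced.mul_mul_eq_zero (by simpa using congr_fun₂ h l j) _

variable [DecidableEq ι]

theorem isUnit_of_isUnit_smul_one (i : ι) (h : IsUnit (x • (1 : Matrix ι ι S))) : IsUnit x := by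
  obtain ⟨W, hxW, hWx⟩ := isUnit_iff_exists.1 h
  refine isUnit_iff_exists.2 ⟨W i i, ?_, ?_⟩
  · simpa [smul_mul] using congr_fun₂ hxW i i
  · simpa [smul_one_eq_diagonal, mul_diagonal] using congr_fun₂ hWx i i

theorem smul_eq_zero_of_pow_mul_eq_zero [IsReduced S] (U : (Matrix ι ι S)ˣ) {N : Matrix ι ι S}
    {k : ℕ} (h : (U * (x • 1)) ^ k * N = 0) : x • N = 0 := by
  induction k generalizing N with
  | zero => rw [pow_zero, one_mul] at h; rw [h, smul_zero]
  | succ k ih =>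
    rw [pow_succ, mul_assoc] at h
    have hxxN : x • (x • N) = 0 := by
      have h' := smul_mul_eq_zero_of_smul_eq_zero (ih h) ↑U⁻¹
      rwa [mul_assoc, smul_mul, one_mul, ← mul_assoc, Units.inv_mul, one_mul] at h'
    ext i j
    exact IsReduced.mul_eq_zero_of_mul_mul_eq_zero_s6 (by simpa using congr_fun₂ hxxN i j)

variable {U : (Matrix ι ι S)ˣ} {E B : Matrix ι ι S}

theorem smul_one_sub_eq_zero_of_units_mul_eq [IsReduced S] (hE : IsIdempotentElem E)
    (hB : IsNilpotent B) (hEB : Commute E B) (hx : (U : Matrix ι ι S) * (x • 1) = E + B) :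
    x • (1 - E) = 0 := by
  obtain ⟨k, -, c, hc⟩ := hE.exists_pow_add_eq_units_mul hB hEB
  refine smul_eq_zero_of_pow_mul_eq_zero U (k := k) ?_
  rw [hx, hc, mul_assoc, hE.mul_one_sub_self, mul_zero]

theorem apply_mul_eq_zero_of_units_mul_eq (hE : IsIdempotentElem E) (hB : IsNilpotent B)
    (hEB : Commute E B) (hx : (U : Matrix ι ι S) * (x • 1) = E + B) {a : S} (ha : x * a = 0)
    (i j : ι) : E i j * a = 0 := by
  obtain ⟨k, hk, c, hc⟩ := hE.exists_pow_add_eq_units_mul hB hEB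
  obtain ⟨k, rfl⟩ := Nat.exists_eq_succ_of_ne_zero hk
  have hxa : (U : Matrix ι ι S) * (x • 1) * (a • 1) = 0 := by
    rw [mul_assoc, smul_mul, one_mul, smul_smul, ha, zero_smul, mul_zero]
  have hEa : E * (a • 1) = 0 :=
    calc E * (a • 1) = ↑c⁻¹ * ((E + B) ^ (k + 1) * (a • 1)) := by
          rw [hc, ← mul_assoc, ← mul_assoc, Units.inv_mul, one_mul]
      _ = 0 := by rw [pow_succ, mul_assoc, ← hx, hxa, mul_zero, mul_zero]
  simpa [smul_one_eq_diagonal, mul_diagonal] using congr_fun₂ hEa i j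

end Matrix

namespace StronglyUnitNilClean

variable {ι S : Type*} [Fintype ι] [DecidableEq ι] [Ring S] [IsReduced S]

theorem exists_rightAnn_generator (hS : StronglyUnitNilClean (Matrix ι ι S)) (i : ι) (x : S) :
    ∃ g : S, x * g = 0 ∧ ∀ a, x * a = 0 → g * a = a := by
  obtain ⟨U, E, B, hE, hB, hEB, hx⟩ := hS (x • 1)
  refine ⟨1 - E i i, ?_, fun a ha => ?_⟩
  · simpa using congr_fun₂ (Matrix.smul_one_sub_eq_zero_of_units_mul_eq hE hB hEB hx) i i
  · rw [sub_mul, one_mul, Matrix.apply_mul_eq_zero_of_units_mul_eq hE hB hEB hx ha, sub_zero]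

theorem isUnit_of_right_eq_zero_of_mul (hS : StronglyUnitNilClean (Matrix ι ι S)) (i : ι) {x : S}
    (hx : ∀ a, x * a = 0 → a = 0) : IsUnit x := by
  obtain ⟨U, E, B, hE, hB, hEB, hUx⟩ := hS (x • 1)
  have hE1 : E = 1 := by
    ext j l
    have h := congr_fun₂ (Matrix.smul_one_sub_eq_zero_of_units_mul_eq hE hB hEB hUx) j l
    exact (sub_eq_zero.1 (hx _ (by simpa using h))).symm
  have hunit : IsUnit ((U : Matrix ι ι S) * (x • 1)) := by
    rw [hUx, hE1]
    exact hB.isUnit_one_add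
  refine Matrix.isUnit_of_isUnit_smul_one i ?_
  simpa [← mul_assoc] using U⁻¹.isUnit.mul hunit

theorem exists_units_mul_isIdempotentElem (hS : StronglyUnitNilClean (Matrix ι ι S)) (i : ι)
    (x : S) : ∃ v : Sˣ, IsIdempotentElem (↑v * x) := by
  obtain ⟨g, hxg, hg⟩ := exists_rightAnn_generator hS i x
  have hgg : g * g = g := hg g hxg
  have hgx : g * x = 0 := IsReduced.mul_eq_zero_symm hxg
  have hunit : IsUnit (x + g) := isUnit_of_right_eq_zero_of_mul hS i fun a ha => by
    have hga : g * a = 0 :=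
      calc g * a = g * (x + g) * a := by rw [mul_add, hgx, hgg, zero_add]
        _ = 0 := by rw [mul_assoc, ha, mul_zero]
    have hxa : x * a = 0 :=
      calc x * a = (x + g) * a - g * a := by rw [add_mul, add_sub_cancel_right]
        _ = 0 := by rw [ha, hga, sub_zero]
    rw [← hg a hxa, hga]
  have hw : ↑hunit.unit⁻¹ * (x + g) = 1 := hunit.val_inv_mul
  have hwg : ↑hunit.unit⁻¹ * g = g :=
    calc ↑hunit.unit⁻¹ * g = ↑hunit.unit⁻¹ * ((x + g) * g) := by rw [add_mul, hxg, hgg, zero_add]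
      _ = g := by rw [← mul_assoc, hw, one_mul]
  have hwx : ↑hunit.unit⁻¹ * x = 1 - g := by
    rw [eq_sub_iff_add_eq, ← hw, mul_add, hwg]
  exact ⟨hunit.unit⁻¹, hwx ▸ IsIdempotentElem.one_sub hgg⟩

end StronglyUnitNilClean

theorem stronglyUnitNilClean_of_matrix_of_NI
    (R : Type*) [Ring R] (hNI : IsNIRing R) (n : ℕ) (hn : 1 ≤ n)
    (h : StronglyUnitNilClean (Matrix (Fin n) (Fin n) R)) :
    StronglyUnitNilClean R := by
  obtain ⟨I, hI⟩ := hNI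
  have hker (r : R) : I.ringCon.mk' r = 0 ↔ IsNilpotent r := by
    rw [← TwoSidedIdeal.mem_ker, TwoSidedIdeal.ker_ringCon_mk', hI]
  have hsurj := I.ringCon.mk'_surjective
  have := isReduced_of_surjective_of_ker_eq hsurj hker
  have hmatrix := h.of_surjective _ (RingHom.mapMatrix_surjective (ι := Fin n) hsurj)
  exact .of_surjective_of_ker_isNilpotent hsurj (fun r => (hker r).1)
    (hmatrix.exists_units_mul_isIdempotentElem ⟨0, hn⟩)
end

section
/- For a natural number n > 1, the ring ℤ/nℤ is unit-regular if and only if n is squarefree (n is a product of distinct primes). -/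
/-- In a commutative ring, a (von Neumann) regular element is unit-regular. -/
lemma unitRegular_of_regular {R : Type*} [CommRing R] (a x : R) (h : a = a * x * a) :
    ∃ u : Rˣ, a = a * (u : R) * a := by
  refine ⟨⟨x * a * x + 1 - x * a, x * a * a + 1 - x * a, ?_, ?_⟩, ?_⟩
  · linear_combination ((x - x ^ 2) * a + x ^ 2 - 2 * x) * h
  · linear_combination ((x - x ^ 2) * a + x ^ 2 - 2 * x) * h
  · show a = a * (x * a * x + 1 - x * a) * a
    linear_combination ((x - 1) * a + 1) * h

/-- In a finite monoid, some positive power of any element is idempotent-ish: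
there is `N ≥ 1` with `a ^ (2 * N) = a ^ N`. -/
lemma exists_pow_sq_eq {M : Type*} [Monoid M] [Finite M] (a : M) :
    ∃ N : ℕ, 0 < N ∧ a ^ (2 * N) = a ^ N := by
  obtain ⟨i, j, hij, h⟩ := Finite.exists_ne_map_eq_of_infinite (fun k : ℕ => a ^ (k + 1))
  wlog hlt : i < j generalizing i j
  · exact this j i hij.symm h.symm (by omega)
  set m := j - i with hm
  have hm1 : 1 ≤ m := by omega
  have key : ∀ k : ℕ, a ^ (i + 1 + k * m) = a ^ (i + 1) := by
    intro k
    induction k with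
    | zero => simp
    | succ k ih =>
      have : a ^ (i + 1 + (k + 1) * m) = a ^ (i + 1 + k * m) * a ^ m := by
        rw [← pow_add]; ring_nf
      rw [this, ih, ← pow_add]
      have : i + 1 + m = j + 1 := by omega
      rw [this]
      exact h.symm
  refine ⟨(i + 1) * m, by positivity, ?_⟩
  have h1 : a ^ ((i + 1) * m) = a ^ ((i + 1) * m - (i + 1)) * a ^ (i + 1) := by
    rw [← pow_add]
    congr 1
    have : i + 1 ≤ (i + 1) * m := Nat.le_mul_of_pos_right _ (by omega)
    omega
  have h2 : a ^ (2 * ((i + 1) * m)) =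
      a ^ ((i + 1) * m - (i + 1)) * a ^ (i + 1 + (i + 1) * m) := by
    rw [← pow_add]
    congr 1
    have : i + 1 ≤ (i + 1) * m := Nat.le_mul_of_pos_right _ (by omega)
    omega
  rw [h2, key (i + 1), ← h1]

theorem zmod_unitRegular_iff_squarefree (n : ℕ) (hn : 1 < n) :
    UnitRegular (ZMod n) ↔ Squarefree n := by
  constructor
  · intro hUR
    have hred : IsReduced (ZMod n) := by
      rw [isReduced_iff_pow_one_lt 2 one_lt_two]
      intro x hx
      obtain ⟨u, hu⟩ := hUR x
      calc x = x * (u : ZMod n) * x := hu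
        _ = (u : ZMod n) * x ^ 2 := by ring
        _ = 0 := by rw [hx, mul_zero]
    rcases isReduced_zmod.mp hred with h | h
    · exact h
    · omega
  · intro hsq
    have : NeZero n := ⟨by omega⟩
    have hred : IsReduced (ZMod n) := isReduced_zmod.mpr (Or.inl hsq)
    intro a
    obtain ⟨N, hN, hNe⟩ := exists_pow_sq_eq a
    -- `e = a ^ N` is idempotent
    have he : IsIdempotentElem (a ^ N) := by
      show a ^ N * a ^ N = a ^ N
      rw [← pow_add]
      have : N + N = 2 * N := by ring
      rw [this, hNe]
    have he' : IsIdempotentElem (1 - a ^ N) := he.one_sub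
    -- `a * (1 - a ^ N)` is nilpotent, hence zero
    have hnil : (a * (1 - a ^ N)) ^ N = 0 := by
      have hp : (1 - a ^ N) ^ N = 1 - a ^ N := by
        nth_rewrite 2 [show N = N - 1 + 1 from by omega]
        exact he'.pow_succ_eq _
      rw [mul_pow, hp, mul_sub, mul_one, ← pow_add]
      have : N + N = 2 * N := by ring
      rw [this, hNe, sub_self]
    have hzero : a * (1 - a ^ N) = 0 := hred.eq_zero _ ⟨N, hnil⟩
    have ha : a = a * a ^ N := by
      linear_combination hzero
    refine unitRegular_of_regular a (a ^ (N - 1)) ?_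
    calc a = a * a ^ N := ha
      _ = a * a ^ (N - 1) * a := by
          rw [mul_assoc]
          congr 1
          rw [← pow_succ]
          congr 1
          omega
end
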